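/- arXiv:1712.07988 — 5 statements merged into one kernel-verified Lean document; each statement's English description precedes it below -/
import Mathlib

section
/- If B is a bounded linear operator on H satisfying B A ⊆ A B, then B maps F(A,λ) into F(A,λ), and the adjoint B* maps the orthogonal complement F(A,λ)⊥ into F(A,λ)⊥. -/
open InnerProductSpace RCLike Filter Topology MeasureTheory Set

variable {𝕜 E : Type*} [RCLike 𝕜] [NormedAddCommGroup E] [InnerProductSpace 𝕜 E]

local notation "⟪" x ", " y "⟫" => @inner 𝕜 _ _ x y

/-- `PowRel A n x y` means `x ∈ D(Aⁿ)` and `Aⁿ x = y`. -/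
inductive PowRel (A : E →ₗ.[𝕜] E) : ℕ → E → E → Prop
  | zero (x : E) : PowRel A 0 x x
  | succ {n : ℕ} {x y : E} (h : PowRel A n x y) (hy : y ∈ A.domain) :
      PowRel A (n + 1) x (A ⟨y, hy⟩)

/-- `F(A,λ)` for an unbounded operator. -/
def Fset (A : E →ₗ.[𝕜] E) (lam : ℝ) : Set E :=
  {x | ∀ n : ℕ, ∃ y : E, PowRel A n x y ∧ ‖y‖ ≤ lam ^ n * ‖x‖}

/-- orthogonal complement of a set -/
def ocompl (𝕜' : Type*) {E' : Type*} [RCLike 𝕜'] [NormedAddCommGroup E']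
    [InnerProductSpace 𝕜' E'] (S : Set E') : Set E' :=
  {y | ∀ x ∈ S, (inner 𝕜' x y : 𝕜') = 0}

/-- Hermitian (symmetric) partially defined operator. -/
def IsHermitianPMap (A : E →ₗ.[𝕜] E) : Prop :=
  ∀ x y : A.domain, ⟪A x, (y : E)⟫ = ⟪(x : E), A y⟫

/-- Self-adjoint partially defined operator (densely defined, symmetric, maximal). -/
def IsSelfAdjointPMap (A : E →ₗ.[𝕜] E) : Prop :=
  Dense (A.domain : Set E) ∧ IsHermitianPMap A ∧
    ∀ y z : E, (∀ x : A.domain, ⟪A x, y⟫ = ⟪(x : E), z⟫) →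
      ∃ hy : y ∈ A.domain, A ⟨y, hy⟩ = z

/-- `F(T,λ)` for a bounded operator. -/
def FsetB (T : E →L[𝕜] E) (lam : ℝ) : Set E :=
  {x | ∀ n : ℕ, ‖(T ^ n) x‖ ≤ lam ^ n * ‖x‖}

/-- Spectral family (resolution of the identity). -/
def IsSpectralFamily (P : ℝ → (E →L[𝕜] E)) : Prop :=
  (∀ t, IsIdempotentElem (P t)) ∧
  (∀ t x y, ⟪P t x, y⟫ = ⟪x, P t y⟫) ∧
  (∀ s t : ℝ, s ≤ t → ∀ x, P t (P s x) = P s x) ∧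
  (∀ t x, Tendsto (fun s => P s x) (𝓝[>] t) (𝓝 (P t x))) ∧
  (∀ x, Tendsto (fun t => P t x) atBot (𝓝 (0 : E))) ∧
  (∀ x, Tendsto (fun t => P t x) atTop (𝓝 x))

open Classical in
/-- Lebesgue–Stieltjes measure of a monotone right-continuous function (junk value otherwise). -/
noncomputable def stMeasure (f : ℝ → ℝ) : Measure ℝ :=
  if h : Monotone f ∧ ∀ x, ContinuousWithinAt f (Ici x) x then
    StieltjesFunction.measure ⟨f, h.1, h.2⟩ else 0

/-!
If `x ∈ F(A,λ)` then `z = Bx` lies in every `D(Aⁿ)` with `AⁿBx = BAⁿx`, so `aₙ = ‖Aⁿz‖` grows at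
most like `‖B‖ ‖x‖ λⁿ`. Since `A` is Hermitian, `aₙ² = ⟪Aⁿz, Aⁿz⟫ = ⟪z, A²ⁿz⟫ ≤ a₀ a₂ₙ`, and
iterating this doubling inequality gives `aₙ^(2ʲ) ≤ a₀^(2ʲ-1) a_(2ʲn) ≤ C a₀^(2ʲ-1) λ^(2ʲn)`;
taking `2ʲ`-th roots as `j → ∞` removes the constant: `aₙ ≤ λⁿ a₀`. The statement about `B*` is
the adjoint of the first one.
-/

lemma le_of_forall_pow_two_pow_mul_le {x y z K : ℝ} (hy : 0 ≤ y) (hz : 0 < z)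
    (h : ∀ j : ℕ, x ^ 2 ^ j * z ≤ K * y ^ 2 ^ j) : x ≤ y := by
  by_contra! hyx
  rcases hy.eq_or_lt with rfl | hy
  · have := h 0
    simp only [pow_zero, pow_one, mul_zero] at this
    nlinarith
  · have hr : 1 < x / y := (one_lt_div hy).2 hyx
    obtain ⟨m, hm⟩ := pow_unbounded_of_one_lt (K / z) hr
    have hbound : (x / y) ^ 2 ^ m ≤ K / z := by
      rw [div_pow, div_le_div_iff₀ (by positivity) hz]
      linarith [h m]
    have := pow_le_pow_right₀ hr.le (Nat.lt_two_pow_self (n := m)).le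
    linarith

lemma pow_two_pow_le_of_sq_le {a : ℕ → ℝ} (ha : ∀ n, 0 ≤ a n)
    (hsq : ∀ n, a n ^ 2 ≤ a 0 * a (2 * n)) (j n : ℕ) :
    a n ^ 2 ^ j ≤ a 0 ^ (2 ^ j - 1) * a (2 ^ j * n) := by
  induction j with
  | zero => simp
  | succ j ih =>
    have hexp : 2 ^ (j + 1) - 1 = 2 * (2 ^ j - 1) + 1 := by
      have := Nat.one_le_two_pow (n := j)
      rw [pow_succ]; omega
    calc a n ^ 2 ^ (j + 1) = (a n ^ 2 ^ j) ^ 2 := by rw [pow_succ, pow_mul]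
      _ ≤ (a 0 ^ (2 ^ j - 1) * a (2 ^ j * n)) ^ 2 := by gcongr; exact pow_nonneg (ha n) _
      _ = a 0 ^ (2 * (2 ^ j - 1)) * a (2 ^ j * n) ^ 2 := by rw [mul_pow, ← pow_mul, mul_comm _ 2]
      _ ≤ a 0 ^ (2 * (2 ^ j - 1)) * (a 0 * a (2 * (2 ^ j * n))) := by
          gcongr; exacts [pow_nonneg (ha 0) _, hsq _]
      _ = a 0 ^ (2 ^ (j + 1) - 1) * a (2 ^ (j + 1) * n) := by
          rw [hexp, pow_succ, pow_succ]; ring_nf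

lemma le_pow_mul_of_sq_le {a : ℕ → ℝ} (ha : ∀ n, 0 ≤ a n)
    (hsq : ∀ n, a n ^ 2 ≤ a 0 * a (2 * n)) {C lam : ℝ} (hlam : 0 ≤ lam)
    (hC : ∀ n, a n ≤ C * lam ^ n) (n : ℕ) : a n ≤ lam ^ n * a 0 := by
  rcases (ha 0).eq_or_lt with h0 | h0
  · have hn : a n ^ 2 ≤ 0 := by simpa [← h0] using hsq n
    rw [pow_eq_zero_iff two_ne_zero |>.1 (hn.antisymm (sq_nonneg _)), ← h0, mul_zero]
  · refine le_of_forall_pow_two_pow_mul_le (K := C) (by positivity) h0 fun j => ?_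
    calc a n ^ 2 ^ j * a 0 ≤ a 0 ^ (2 ^ j - 1) * a (2 ^ j * n) * a 0 := by
          gcongr; exact pow_two_pow_le_of_sq_le ha hsq j n
      _ ≤ a 0 ^ (2 ^ j - 1) * (C * lam ^ (2 ^ j * n)) * a 0 := by gcongr; exact hC _
      _ = C * (a 0 ^ (2 ^ j - 1) * a 0) * (lam ^ n) ^ 2 ^ j := by rw [← pow_mul]; ring_nf
      _ = C * (lam ^ n * a 0) ^ 2 ^ j := by
          rw [← pow_succ, Nat.sub_add_cancel Nat.one_le_two_pow, mul_pow]; ring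

def IsOrbit (A : E →ₗ.[𝕜] E) (y : ℕ → E) : Prop :=
  ∀ n, ∃ h : y n ∈ A.domain, A ⟨y n, h⟩ = y (n + 1)

namespace PowRel

variable {A : E →ₗ.[𝕜] E}

lemma unique {n : ℕ} {x y z : E} (hy : PowRel A n x y) (hz : PowRel A n x z) : y = z := by
  induction hy generalizing z with
  | zero => cases hz; rfl
  | succ _ _ ih => cases hz with | succ h' _ => obtain rfl := ih h'; rfl

lemma of_isOrbit {y : ℕ → E} (hy : IsOrbit A y) (n : ℕ) : PowRel A n (y 0) (y n) := by
  induction n with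
  | zero => exact .zero _
  | succ n ih =>
    obtain ⟨hn, hAy⟩ := hy n
    exact hAy ▸ .succ ih hn

lemma isOrbit {x : E} {y : ℕ → E} (hy : ∀ n, PowRel A n x (y n)) : IsOrbit A y := by
  intro n
  have hsucc := hy (n + 1)
  generalize y (n + 1) = z at hsucc ⊢
  cases hsucc with
  | succ h hdom => obtain rfl := unique h (hy n); exact ⟨hdom, rfl⟩

end PowRel

section Orbit

variable {A : E →ₗ.[𝕜] E}

lemma mem_Fset_iff {lam : ℝ} {x : E} :
    x ∈ Fset A lam ↔ ∃ y : ℕ → E, IsOrbit A y ∧ y 0 = x ∧ ∀ n, ‖y n‖ ≤ lam ^ n * ‖x‖ := by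
  constructor
  · intro hx
    choose y hy hbound using hx
    exact ⟨y, PowRel.isOrbit hy, PowRel.unique (hy 0) (.zero x), hbound⟩
  · rintro ⟨y, hy, rfl, hbound⟩ n
    exact ⟨y n, PowRel.of_isOrbit hy n, hbound n⟩

lemma IsOrbit.map {B : E →L[𝕜] E}
    (hcomm : ∀ (x : E) (hx : x ∈ A.domain), ∃ h : B x ∈ A.domain,
      A ⟨B x, h⟩ = B (A ⟨x, hx⟩))
    {y : ℕ → E} (hy : IsOrbit A y) : IsOrbit A (fun n => B (y n)) := by
  intro n
  obtain ⟨hn, hAy⟩ := hy n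
  obtain ⟨hBn, hABy⟩ := hcomm (y n) hn
  exact ⟨hBn, by rw [hABy, hAy]⟩

lemma IsOrbit.inner_eq (hH : IsHermitianPMap A) {y : ℕ → E}
    (hy : IsOrbit A y) (m k : ℕ) : ⟪y m, y k⟫ = ⟪y 0, y (m + k)⟫ := by
  induction m generalizing k with
  | zero => simp
  | succ m ih =>
    obtain ⟨hm, hAm⟩ := hy m
    obtain ⟨hk, hAk⟩ := hy k
    have hshift := hH ⟨y m, hm⟩ ⟨y k, hk⟩
    rw [hAm, hAk] at hshift
    rw [hshift, ih, Nat.add_right_comm, add_assoc]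

lemma IsOrbit.norm_sq_le (hH : IsHermitianPMap A) {y : ℕ → E}
    (hy : IsOrbit A y) (n : ℕ) : ‖y n‖ ^ 2 ≤ ‖y 0‖ * ‖y (2 * n)‖ := by
  rw [← inner_self_eq_norm_sq (𝕜 := 𝕜), hy.inner_eq hH, ← two_mul]
  exact re_inner_le_norm _ _

lemma map_mem_Fset (hH : IsHermitianPMap A) {lam : ℝ} (hlam : 0 ≤ lam)
    {B : E →L[𝕜] E}
    (hcomm : ∀ (x : E) (hx : x ∈ A.domain), ∃ h : B x ∈ A.domain,
      A ⟨B x, h⟩ = B (A ⟨x, hx⟩))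
    {x : E} (hx : x ∈ Fset A lam) : B x ∈ Fset A lam := by
  obtain ⟨y, hy, rfl, hbound⟩ := mem_Fset_iff.1 hx
  have hBy : IsOrbit A (fun n => B (y n)) := hy.map hcomm
  have hgrowth (n : ℕ) : ‖B (y n)‖ ≤ (‖B‖ * ‖y 0‖) * lam ^ n :=
    calc ‖B (y n)‖ ≤ ‖B‖ * ‖y n‖ := B.le_opNorm _
      _ ≤ ‖B‖ * (lam ^ n * ‖y 0‖) := by gcongr; exact hbound n
      _ = (‖B‖ * ‖y 0‖) * lam ^ n := by ring
  exact mem_Fset_iff.2 ⟨_, hBy, rfl,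
    le_pow_mul_of_sq_le (fun _ => norm_nonneg _) (hBy.norm_sq_le hH) hlam hgrowth⟩

end Orbit

lemma adjoint_mem_ocompl [CompleteSpace E] {S : Set E} {B : E →L[𝕜] E}
    (hB : ∀ x ∈ S, B x ∈ S) {y : E} (hy : y ∈ ocompl 𝕜 S) :
    ContinuousLinearMap.adjoint B y ∈ ocompl 𝕜 S := by
  intro x hx
  rw [ContinuousLinearMap.adjoint_inner_right]
  exact hy (B x) (hB x hx)

theorem stmt1_general [CompleteSpace E] (A : E →ₗ.[𝕜] E) (hH : IsHermitianPMap A)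
    (lam : ℝ) (hlam : 0 ≤ lam) (B : E →L[𝕜] E)
    (hcomm : ∀ (x : E) (hx : x ∈ A.domain), ∃ h : B x ∈ A.domain,
      A ⟨B x, h⟩ = B (A ⟨x, hx⟩)) :
    (∀ x ∈ Fset A lam, B x ∈ Fset A lam) ∧
      ∀ y ∈ ocompl 𝕜 (Fset A lam), ContinuousLinearMap.adjoint B y ∈ ocompl 𝕜 (Fset A lam) := by
  have hB (x : E) (hx : x ∈ Fset A lam) : B x ∈ Fset A lam := map_mem_Fset hH hlam hcomm hx
  exact ⟨hB, fun _ => adjoint_mem_ocompl hB⟩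

theorem stmt1 [CompleteSpace E] (A : E →ₗ.[𝕜] E) (hA : A.IsClosed) (hH : IsHermitianPMap A)
    (lam : ℝ) (hlam : 0 ≤ lam) (B : E →L[𝕜] E)
    (hcomm : ∀ (x : E) (hx : x ∈ A.domain), ∃ h : B x ∈ A.domain,
      A ⟨B x, h⟩ = B (A ⟨x, hx⟩)) :
    (∀ x ∈ Fset A lam, B x ∈ Fset A lam) ∧
      ∀ y ∈ ocompl 𝕜 (Fset A lam), ContinuousLinearMap.adjoint B y ∈ ocompl 𝕜 (Fset A lam) :=
  stmt1_general A hH lam hlam B hcomm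
end

section
/- For a closed Hermitian operator A and ε ≥ 0, one has the equality F(A², ε²) = F(A, ε). -/
open InnerProductSpace RCLike Filter Topology MeasureTheory Set

variable {𝕜 E : Type*} [RCLike 𝕜] [NormedAddCommGroup E] [InnerProductSpace 𝕜 E]

local notation "⟪" x ", " y "⟫" => @inner 𝕜 _ _ x y

/-- `F(A², λ)`, where `A²` is the operator with domain `{x ∈ D(A) : A x ∈ D(A)}`;
its `n`-th power is `A^(2n)`. -/
def FsetSq (A : E →ₗ.[𝕜] E) (lam : ℝ) : Set E :=
  {x | ∀ n : ℕ, ∃ y : E, PowRel A (2 * n) x y ∧ ‖y‖ ≤ lam ^ n * ‖x‖}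

/-
For symmetric `A` and `u ∈ D(A²)`, `‖A u‖² = ⟪u, A² u⟫ ≤ ‖u‖ ‖A² u‖`. Applied to `u = A^(2k) x` this
bounds the odd power `‖A^(2k+1) x‖²` by `‖A^(2k) x‖ ‖A^(2k+2) x‖ ≤ ε^(4k+2) ‖x‖²`, so the bounds on
the even powers of `A` already control all powers.
-/

section

variable {A : E →ₗ.[𝕜] E} {m n : ℕ} {x y : E}

theorem PowRel.unique_s3 {y' : E} (h : PowRel A n x y) (h' : PowRel A n x y') : y = y' := by
  induction h generalizing y' with
  | zero x => cases h'; rfl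
  | succ h hy ih =>
    cases h' with
    | succ h' hy' =>
      obtain rfl := ih h'
      rfl

theorem PowRel.exists_of_le (h : PowRel A n x y) (hm : m ≤ n) : ∃ z, PowRel A m x z := by
  induction h with
  | zero x => exact ⟨x, Nat.le_zero.mp hm ▸ .zero x⟩
  | succ h hy ih =>
    rcases Nat.of_le_succ hm with hm | rfl
    · exact ih hm
    · exact ⟨_, .succ h hy⟩

theorem IsHermitianPMap.norm_apply_sq_le (hH : IsHermitianPMap A) (u : A.domain)
    (hu : A u ∈ A.domain) : ‖A u‖ ^ 2 ≤ ‖(u : E)‖ * ‖A ⟨A u, hu⟩‖ :=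
  calc ‖A u‖ ^ 2 = RCLike.re ⟪A u, A u⟫ := (inner_self_eq_norm_sq _).symm
    _ = RCLike.re ⟪(u : E), A ⟨A u, hu⟩⟫ := by rw [hH u ⟨A u, hu⟩]
    _ ≤ ‖(u : E)‖ * ‖A ⟨A u, hu⟩‖ := (RCLike.re_le_norm _).trans (norm_inner_le_norm _ _)

theorem IsHermitianPMap.norm_powRel_sq_le (hH : IsHermitianPMap A) {z z₁ z₂ : E}
    (h₀ : PowRel A m x z) (h₁ : PowRel A (m + 1) x z₁) (h₂ : PowRel A (m + 2) x z₂) :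
    ‖z₁‖ ^ 2 ≤ ‖z‖ * ‖z₂‖ := by
  cases h₂ with
  | succ h₂ hw =>
    obtain rfl := h₂.unique_s3 h₁
    cases h₁ with
    | succ h₁ hu =>
      obtain rfl := h₁.unique_s3 h₀
      exact hH.norm_apply_sq_le _ hw

theorem Fset_subset_FsetSq (A : E →ₗ.[𝕜] E) (ε : ℝ) : Fset A ε ⊆ FsetSq A (ε ^ 2) := by
  intro x hx n
  obtain ⟨y, hy, hb⟩ := hx (2 * n)
  exact ⟨y, hy, by rwa [← pow_mul]⟩

theorem FsetSq_subset_Fset (hH : IsHermitianPMap A) {ε : ℝ} (hε : 0 ≤ ε) :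
    FsetSq A (ε ^ 2) ⊆ Fset A ε := by
  intro x hx n
  obtain ⟨k, rfl | rfl⟩ := Nat.even_or_odd' n
  · obtain ⟨y, hy, hb⟩ := hx k
    exact ⟨y, hy, by rwa [pow_mul]⟩
  obtain ⟨z, hz, hbz⟩ := hx k
  obtain ⟨z₂, hz₂, hbz₂⟩ := hx (k + 1)
  rw [mul_add, mul_one] at hz₂
  obtain ⟨y, hy⟩ := hz₂.exists_of_le (Nat.le_succ _)
  refine ⟨y, hy, ?_⟩
  have hsq : ‖y‖ ^ 2 ≤ (ε ^ (2 * k + 1) * ‖x‖) ^ 2 :=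
    calc ‖y‖ ^ 2 ≤ ‖z‖ * ‖z₂‖ := hH.norm_powRel_sq_le hz hy hz₂
      _ ≤ (ε ^ 2) ^ k * ‖x‖ * ((ε ^ 2) ^ (k + 1) * ‖x‖) :=
          mul_le_mul hbz hbz₂ (norm_nonneg _) (by positivity)
      _ = (ε ^ (2 * k + 1) * ‖x‖) ^ 2 := by ring
  exact (pow_le_pow_iff_left₀ (norm_nonneg _) (by positivity) two_ne_zero).mp hsq

end

theorem stmt3_general (A : E →ₗ.[𝕜] E) (hH : IsHermitianPMap A)
    (ε : ℝ) (hε : 0 ≤ ε) :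
    FsetSq A (ε ^ 2) = Fset A ε :=
  (FsetSq_subset_Fset hH hε).antisymm (Fset_subset_FsetSq A ε)

theorem stmt3 (A : E →ₗ.[𝕜] E) (hA : A.IsClosed) (hH : IsHermitianPMap A)
    (ε : ℝ) (hε : 0 ≤ ε) :
    FsetSq A (ε ^ 2) = Fset A ε :=
  stmt3_general A hH ε hε
end

section
/- If A is a Hermitian operator on a finite-dimensional Hilbert space H and x ∈ F(A,λ)⊥ with x ≠ 0, then ‖Ax‖ > λ‖x‖ for every λ ≥ 0. -/
open InnerProductSpace RCLike Filter Topology MeasureTheory Set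

variable {𝕜 E : Type*} [RCLike 𝕜] [NormedAddCommGroup E] [InnerProductSpace 𝕜 E]

local notation "⟪" x ", " y "⟫" => @inner 𝕜 _ _ x y

/-- `F(A,λ)` for an everywhere defined linear operator. -/
def FsetL (T : E →ₗ[𝕜] E) (lam : ℝ) : Set E :=
  {x | ∀ n : ℕ, ‖(T ^ n) x‖ ≤ lam ^ n * ‖x‖}

/-! In an orthonormal eigenbasis `b` of `A`, every eigenvector whose eigenvalue has modulus at most
`λ` lies in `F(A,λ)`, so `x ⊥ F(A,λ)` only has components `⟪b i, x⟫` along eigenvalues `|μ i| > λ`.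
Hence `‖A x‖² = ∑ μ i² ‖⟪b i, x⟫‖² > λ² ∑ ‖⟪b i, x⟫‖² = λ² ‖x‖²`. -/

lemma mem_FsetL_of_hasEigenvector {T : E →ₗ[𝕜] E} {μ : 𝕜} {v : E}
    (hv : Module.End.HasEigenvector T μ v) {lam : ℝ} (hμ : ‖μ‖ ≤ lam) : v ∈ FsetL T lam := by
  intro n
  rw [hv.pow_apply, norm_smul, norm_pow]
  gcongr

lemma sq_mul_sum_sq_lt_sum_sq_mul_sq {ι : Type*} [Fintype ι] {lam : ℝ} (hlam : 0 ≤ lam)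
    {μ a : ι → ℝ} (h : ∀ i, a i ≠ 0 → lam < |μ i|) {i₀ : ι} (hi₀ : a i₀ ≠ 0) :
    lam ^ 2 * ∑ i, a i ^ 2 < ∑ i, μ i ^ 2 * a i ^ 2 := by
  have hsq : ∀ i, a i ≠ 0 → lam ^ 2 < μ i ^ 2 := fun i hi => by
    rw [← sq_abs (μ i)]
    exact pow_lt_pow_left₀ (h i hi) hlam two_ne_zero
  rw [Finset.mul_sum]
  refine Finset.sum_lt_sum (fun i _ => ?_) ⟨i₀, Finset.mem_univ _, ?_⟩
  · by_cases hi : a i = 0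
    · simp [hi]
    · exact mul_le_mul_of_nonneg_right (hsq i hi).le (sq_nonneg _)
  · exact mul_lt_mul_of_pos_right (hsq i₀ hi₀) (by positivity)

namespace LinearMap.IsSymmetric

variable {ι : Type*} [Fintype ι] {T : E →ₗ[𝕜] E} (b : OrthonormalBasis ι 𝕜 E) {μ : ι → ℝ}

lemma sq_norm_apply_eq_sum (hT : T.IsSymmetric) (hb : ∀ i, T (b i) = (μ i : 𝕜) • b i) (x : E) :
    ‖T x‖ ^ 2 = ∑ i, μ i ^ 2 * ‖⟪b i, x⟫‖ ^ 2 := by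
  rw [← b.sum_sq_norm_inner_right]
  refine Finset.sum_congr rfl fun i _ => ?_
  rw [← hT, hb, inner_smul_left, RCLike.conj_ofReal, norm_mul, mul_pow, RCLike.norm_ofReal,
    sq_abs]

lemma mul_norm_lt_norm_apply (hT : T.IsSymmetric) (hb : ∀ i, T (b i) = (μ i : 𝕜) • b i)
    {lam : ℝ} (hlam : 0 ≤ lam) {x : E} (hx : ∀ i, |μ i| ≤ lam → ⟪b i, x⟫ = 0) (hx0 : x ≠ 0) :
    lam * ‖x‖ < ‖T x‖ := by
  obtain ⟨i₀, hi₀⟩ : ∃ i, ⟪b i, x⟫ ≠ 0 := by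
    by_contra! h
    refine hx0 (norm_eq_zero.mp (pow_eq_zero_iff two_ne_zero |>.mp ?_))
    simp [← b.sum_sq_norm_inner_right, h]
  have key := sq_mul_sum_sq_lt_sum_sq_mul_sq hlam (a := fun i => ‖⟪b i, x⟫‖)
    (fun i hi => lt_of_not_ge fun hμ => hi (norm_eq_zero.mpr (hx i hμ))) (norm_ne_zero_iff.mpr hi₀)
  rw [b.sum_sq_norm_inner_right, ← hT.sq_norm_apply_eq_sum b hb, ← mul_pow] at key
  exact lt_of_pow_lt_pow_left₀ 2 (norm_nonneg _) key

end LinearMap.IsSymmetric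

theorem stmt4 [FiniteDimensional 𝕜 E] (A : E →ₗ[𝕜] E) (hA : A.IsSymmetric)
    (lam : ℝ) (hlam : 0 ≤ lam) (x : E) (hx : x ∈ ocompl 𝕜 (FsetL A lam)) (hx0 : x ≠ 0) :
    lam * ‖x‖ < ‖A x‖ :=
  hA.mul_norm_lt_norm_apply (hA.eigenvectorBasis rfl) (hA.apply_eigenvectorBasis rfl) hlam
    (fun i hi => hx _ (mem_FsetL_of_hasEigenvector (hA.hasEigenvector_eigenvectorBasis rfl i)
      (by simpa using hi))) hx0
end

section
/- Let A be self-adjoint, B = A(1+A²)⁻¹, and E the orthogonal projection onto F(B+β, β) where β ≥ 0 is chosen so that B + β ≥ 1. Then E commutes with A in the sense E A ⊆ A E. -/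
open InnerProductSpace RCLike Filter Topology MeasureTheory Set

variable {𝕜 E : Type*} [RCLike 𝕜] [NormedAddCommGroup E] [InnerProductSpace 𝕜 E]

local notation "⟪" x ", " y "⟫" => @inner 𝕜 _ _ x y

lemma lc_aux (β M : ℝ) (hβ : 1 ≤ β) (a : ℕ → ℝ)
    (hpos : ∀ n, 0 < a n)
    (hconv : ∀ n, a (n+1) ^ 2 ≤ a n * a (n+2))
    (hM : ∀ n, a n ≤ M * β ^ n) :
    ∀ n, a (n+1) ≤ β * a n := by
  by_contra h
  push_neg at h
  obtain ⟨k, hk⟩ := h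
  have hβ0 : (0:ℝ) < β := lt_of_lt_of_le one_pos hβ
  have hrat : ∀ m, a (k+1) * a (k+m) ≤ a k * a (k+m+1) := by
    intro m; induction m with
    | zero => simp [mul_comm]
    | succ m ih =>
      have h1 : a (k+m+1)^2 ≤ a (k+m) * a (k+m+2) := hconv (k+m)
      have h2 : 0 < a (k+m) := hpos _
      have h3 : 0 < a (k+m+1) := hpos _
      have h4 : 0 < a k := hpos _
      have key : (a (k+1) * a (k+m+1)) * a (k+m) ≤ (a k * a (k+m+2)) * a (k+m) := by
        nlinarith [mul_le_mul_of_nonneg_right ih h3.le, mul_le_mul_of_nonneg_left h1 h4.le]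
      have h5 := le_of_mul_le_mul_right key h2
      exact h5
  have hgeo : ∀ m, a k * a (k+1) ^ m ≤ a (k+m) * a k ^ m := by
    intro m; induction m with
    | zero => simp
    | succ m ih =>
      calc a k * a (k+1)^(m+1) = (a k * a (k+1)^m) * a (k+1) := by ring
        _ ≤ (a (k+m) * a k ^ m) * a (k+1) :=
            mul_le_mul_of_nonneg_right ih (hpos (k+1)).le
        _ = (a (k+1) * a (k+m)) * a k ^ m := by ring
        _ ≤ (a k * a (k+m+1)) * a k ^ m :=
            mul_le_mul_of_nonneg_right (hrat m) (pow_nonneg (hpos k).le m)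
        _ = a (k+m+1) * a k ^ (m+1) := by ring
  have hak : 0 < a k := hpos k
  have hr : 0 < β * a k := by positivity
  have hc : 1 < a (k+1) / (β * a k) := (one_lt_div hr).2 hk
  obtain ⟨m, hm⟩ := pow_unbounded_of_one_lt ((M * β ^ k) / a k) hc
  rw [div_pow] at hm
  have hbm : (0:ℝ) < (β * a k) ^ m := by positivity
  rw [div_lt_div_iff₀ hak hbm] at hm
  have h6 : a k * a (k+1)^m ≤ M * β^k * (β * a k)^m := by
    calc a k * a (k+1)^m ≤ a (k+m) * a k ^ m := hgeo m
      _ ≤ (M * β ^ (k+m)) * a k ^ m :=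
          mul_le_mul_of_nonneg_right (hM (k+m)) (pow_nonneg hak.le m)
      _ = M * β^k * (β * a k)^m := by rw [pow_add, mul_pow]; ring
  linarith

theorem stmt14 (A : E →ₗ.[𝕜] E) (hA : IsSelfAdjointPMap A) (C B : E →L[𝕜] E)
    (hCdom : ∀ y : E, C y ∈ A.domain)
    (hCright : ∀ y : E, ∃ z : E, PowRel A 2 (C y) z ∧ z + C y = y)
    (hCleft : ∀ x z : E, PowRel A 2 x z → C (z + x) = x)
    (hB : ∀ y : E, B y = A ⟨C y, hCdom y⟩)
    (β : ℝ) (hβ : 0 ≤ β)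
    (hB1 : ∀ x : E, ‖x‖ ^ 2 ≤ re ⟪B x + (β : 𝕜) • x, x⟫)
    (P : E →L[𝕜] E) (hPidem : IsIdempotentElem P)
    (hPsa : ∀ x y : E, ⟪P x, y⟫ = ⟪x, P y⟫)
    (hPmem : ∀ x : E, P x ∈ FsetB (B + (β : 𝕜) • (1 : E →L[𝕜] E)) β)
    (hPfix : ∀ x ∈ FsetB (B + (β : 𝕜) • (1 : E →L[𝕜] E)) β, P x = x) :
    ∀ (x : E) (hx : x ∈ A.domain), ∃ h : P x ∈ A.domain, A ⟨P x, h⟩ = P (A ⟨x, hx⟩) := by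

  -- abbreviations
  classical
  intro x hx
  obtain ⟨hdense, hherm, hmax⟩ := hA
  set T : E →L[𝕜] E := B + (β : 𝕜) • (1 : E →L[𝕜] E) with hT
  have hTapp : ∀ u : E, T u = B u + (β : 𝕜) • u := by
    intro u; simp [hT]
  -- PowRel 2 inversion
  have powrel2 : ∀ (u z : E), PowRel A 2 u z →
      ∃ (h1 : u ∈ A.domain) (h2 : A ⟨u, h1⟩ ∈ A.domain), A ⟨A ⟨u, h1⟩, h2⟩ = z := by
    intro u z h
    cases h with
    | succ h hy =>
      rename_i y
      cases h with
      | succ h0 hy0 =>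
        rename_i y0
        cases h0 with
        | zero => exact ⟨hy0, hy, rfl⟩
  -- L2: A(A(Cy)) = y - Cy
  have L2 : ∀ y : E, ∃ h2 : A ⟨C y, hCdom y⟩ ∈ A.domain,
      A ⟨A ⟨C y, hCdom y⟩, h2⟩ = y - C y := by
    intro y
    obtain ⟨z, hz, hzy⟩ := hCright y
    obtain ⟨h1, h2, h3⟩ := powrel2 _ _ hz
    exact ⟨h2, by rw [h3]; exact eq_sub_of_add_eq hzy⟩
  -- L4: C (A x) = A (C x) for x in domain
  have hCA : ∀ (u : E) (hu : u ∈ A.domain),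
      C (A ⟨u, hu⟩) = A ⟨C u, hCdom u⟩ := by
    intro u hu
    obtain ⟨h2, h3⟩ := L2 u
    have m1 : A ⟨A ⟨C u, hCdom u⟩, h2⟩ ∈ A.domain := by
      rw [h3]; exact sub_mem hu (hCdom u)
    have hpow : PowRel A 2 (A ⟨C u, hCdom u⟩) (A ⟨A ⟨A ⟨C u, hCdom u⟩, h2⟩, m1⟩) :=
      PowRel.succ (PowRel.succ (PowRel.zero _) h2) m1
    have hval : A ⟨A ⟨A ⟨C u, hCdom u⟩, h2⟩, m1⟩ = A ⟨u, hu⟩ - A ⟨C u, hCdom u⟩ := by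
      have he : (⟨A ⟨A ⟨C u, hCdom u⟩, h2⟩, m1⟩ : A.domain)
          = ⟨u, hu⟩ - ⟨C u, hCdom u⟩ := Subtype.ext (by simp [h3])
      rw [he, A.map_sub]
    rw [hval] at hpow
    have := hCleft _ _ hpow
    rw [sub_add_cancel] at this
    exact this
  -- decomposition of any y
  have hdecomp : ∀ y : E, ∀ h2 : A ⟨C y, hCdom y⟩ ∈ A.domain,
      y = A ⟨A ⟨C y, hCdom y⟩, h2⟩ + C y := by
    intro y h2
    obtain ⟨h2', h3⟩ := L2 y
    rw [h3, sub_add_cancel]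
  -- conjugate-symmetric version of hermitian
  have hherm' : ∀ u v : A.domain, ⟪(u : E), A v⟫ = ⟪A u, (v : E)⟫ := by
    intro u v
    rw [← inner_conj_symm, hherm v u, inner_conj_symm]
  -- B is symmetric
  have hBsymm : ∀ y w : E, ⟪B y, w⟫ = ⟪y, B w⟫ := by
    intro y w
    obtain ⟨h2y, h3y⟩ := L2 y
    obtain ⟨h2w, h3w⟩ := L2 w
    rw [hB y, hB w]
    calc ⟪A ⟨C y, hCdom y⟩, w⟫
        = ⟪A ⟨C y, hCdom y⟩, A ⟨A ⟨C w, hCdom w⟩, h2w⟩ + C w⟫ := by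
          rw [← hdecomp w h2w]
      _ = ⟪A ⟨C y, hCdom y⟩, A ⟨A ⟨C w, hCdom w⟩, h2w⟩⟫
          + ⟪A ⟨C y, hCdom y⟩, (C w : E)⟫ := inner_add_right _ _ _
      _ = ⟪A ⟨A ⟨C y, hCdom y⟩, h2y⟩, A ⟨C w, hCdom w⟩⟫
          + ⟪(C y : E), A ⟨C w, hCdom w⟩⟫ := by
          have e1 : (⟪A ⟨C y, hCdom y⟩, A ⟨A ⟨C w, hCdom w⟩, h2w⟩⟫ : 𝕜)
              = ⟪A ⟨A ⟨C y, hCdom y⟩, h2y⟩, A ⟨C w, hCdom w⟩⟫ :=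
            hherm' ⟨A ⟨C y, hCdom y⟩, h2y⟩ ⟨A ⟨C w, hCdom w⟩, h2w⟩
          have e2 : (⟪A ⟨C y, hCdom y⟩, (C w : E)⟫ : 𝕜)
              = ⟪(C y : E), A ⟨C w, hCdom w⟩⟫ := hherm ⟨C y, hCdom y⟩ ⟨C w, hCdom w⟩
          rw [e1, e2]
      _ = ⟪y - C y, A ⟨C w, hCdom w⟩⟫ + ⟪(C y : E), A ⟨C w, hCdom w⟩⟫ := by rw [h3y]
      _ = ⟪y, A ⟨C w, hCdom w⟩⟫ := by rw [inner_sub_left]; ring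
  -- C is symmetric
  have hChalf : ∀ y w : E, ⟪C y, w⟫
      = ⟪A ⟨C y, hCdom y⟩, A ⟨C w, hCdom w⟩⟫ + ⟪C y, C w⟫ := by
    intro y w
    obtain ⟨h2w, h3w⟩ := L2 w
    calc ⟪C y, w⟫ = ⟪C y, A ⟨A ⟨C w, hCdom w⟩, h2w⟩ + C w⟫ := by rw [← hdecomp w h2w]
      _ = ⟪C y, A ⟨A ⟨C w, hCdom w⟩, h2w⟩⟫ + ⟪C y, C w⟫ := inner_add_right _ _ _
      _ = ⟪A ⟨C y, hCdom y⟩, A ⟨C w, hCdom w⟩⟫ + ⟪C y, C w⟫ := by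
          have e1 : (⟪C y, A ⟨A ⟨C w, hCdom w⟩, h2w⟩⟫ : 𝕜)
              = ⟪A ⟨C y, hCdom y⟩, A ⟨C w, hCdom w⟩⟫ :=
            hherm' ⟨C y, hCdom y⟩ ⟨A ⟨C w, hCdom w⟩, h2w⟩
          rw [e1]
  have hCsymm : ∀ y w : E, ⟪C y, w⟫ = ⟪y, C w⟫ := by
    intro y w
    rw [hChalf y w]
    calc ⟪A ⟨C y, hCdom y⟩, A ⟨C w, hCdom w⟩⟫ + ⟪C y, C w⟫
        = (starRingEnd 𝕜) (⟪A ⟨C w, hCdom w⟩, A ⟨C y, hCdom y⟩⟫ + ⟪C w, C y⟫) := by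
          rw [map_add, inner_conj_symm, inner_conj_symm]
      _ = (starRingEnd 𝕜) ⟪C w, y⟫ := by rw [← hChalf w y]
      _ = ⟪y, C w⟫ := inner_conj_symm _ _
  -- T is symmetric
  have hTsymm : ∀ y w : E, ⟪T y, w⟫ = ⟪y, T w⟫ := by
    intro y w
    rw [hTapp, hTapp, inner_add_left, inner_add_right, hBsymm,
      inner_smul_left, inner_smul_right, RCLike.conj_ofReal]
  -- B C = C B
  have hBC : ∀ y : E, B (C y) = C (B y) := by
    intro y
    rw [hB y, hCA (C y) (hCdom y), hB (C y)]
  -- T C = C T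
  have hTC : ∀ y : E, T (C y) = C (T y) := by
    intro y
    rw [hTapp, hTapp, hBC, map_add, C.map_smul]
  -- norm bound: ‖u‖ ≤ ‖T u‖
  have hTnorm : ∀ u : E, ‖u‖ ≤ ‖T u‖ := by
    intro u
    have h1 : ‖u‖ ^ 2 ≤ re ⟪T u, u⟫ := by rw [hTapp]; exact hB1 u
    have h2 : re ⟪T u, u⟫ ≤ ‖T u‖ * ‖u‖ :=
      (re_le_norm _).trans (norm_inner_le_norm _ _)
    rcases eq_or_lt_of_le (norm_nonneg u) with h0 | h0
    · rw [← h0]; exact norm_nonneg _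
    · have : ‖u‖ * ‖u‖ ≤ ‖T u‖ * ‖u‖ := by nlinarith
      exact le_of_mul_le_mul_right this h0
  -- iterated norm bound
  have hTnormpow : ∀ (u : E) (n : ℕ), ‖u‖ ≤ ‖(T ^ n) u‖ := by
    intro u n
    induction n with
    | zero => simp
    | succ n ih =>
      calc ‖u‖ ≤ ‖(T ^ n) u‖ := ih
        _ ≤ ‖T ((T ^ n) u)‖ := hTnorm _
        _ = ‖(T ^ (n+1)) u‖ := by rw [pow_succ']; rfl
  -- commutation abstract lemma
  have key : ∀ (S : E →L[𝕜] E), (∀ a b : E, ⟪S a, b⟫ = ⟪a, S b⟫) →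
      (∀ u : E, S (P u) ∈ FsetB T β) → ∀ u : E, P (S u) = S (P u) := by
    intro S hSsymm hSinv u
    have hfix : ∀ v : E, P (S (P v)) = S (P v) := fun v => hPfix _ (hSinv v)
    apply ext_inner_right 𝕜
    intro v
    calc ⟪P (S u), v⟫ = ⟪S u, P v⟫ := hPsa _ _
      _ = ⟪u, S (P v)⟫ := hSsymm _ _
      _ = ⟪u, P (S (P v))⟫ := by rw [hfix v]
      _ = ⟪P u, S (P v)⟫ := (hPsa _ _).symm
      _ = ⟪S (P u), P v⟫ := (hSsymm _ _).symm
      _ = ⟪P (S (P u)), v⟫ := by rw [← hPsa]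
      _ = ⟪S (P u), v⟫ := by rw [hfix u]
  by_cases hβ1 : β < 1
  -- degenerate case: P = 0
  · have hP0 : ∀ u : E, P u = 0 := by
      intro u
      have h1 : ‖(T ^ 1) (P u)‖ ≤ β ^ 1 * ‖P u‖ := hPmem u 1
      have h2 : ‖P u‖ ≤ ‖(T ^ 1) (P u)‖ := hTnormpow _ 1
      have : ‖P u‖ ≤ β * ‖P u‖ := by simpa using h2.trans h1
      have : ‖P u‖ = 0 := by nlinarith [norm_nonneg (P u)]
      exact norm_eq_zero.mp this
    refine ⟨by rw [hP0]; exact A.domain.zero_mem, ?_⟩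
    have : (⟨P x, by rw [hP0]; exact A.domain.zero_mem⟩ : A.domain) = 0 :=
      Subtype.ext (hP0 x)
    rw [this, A.map_zero, hP0]
  -- main case: 1 ≤ β
  · push_neg at hβ1
    -- growth criterion
    have hF : ∀ (y : E) (M : ℝ), (∀ n : ℕ, ‖(T ^ n) y‖ ≤ M * β ^ n) →
        y ∈ FsetB T β := by
      intro y M hMy
      rcases eq_or_ne y 0 with rfl | hy0
      · intro n; simp
      have hy0' : 0 < ‖y‖ := norm_pos_iff.mpr hy0
      have hpos : ∀ n, 0 < ‖(T ^ n) y‖ := fun n => lt_of_lt_of_le hy0' (hTnormpow y n)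
      have hconv : ∀ n, ‖(T ^ (n+1)) y‖ ^ 2 ≤ ‖(T ^ n) y‖ * ‖(T ^ (n+2)) y‖ := by
        intro n
        have e1 : (⟪(T ^ (n+1)) y, (T ^ (n+1)) y⟫ : 𝕜) = ⟪(T ^ n) y, (T ^ (n+2)) y⟫ := by
          have a1 : (T ^ (n+1)) y = T ((T ^ n) y) := by rw [pow_succ']; rfl
          have a2 : (T ^ (n+2)) y = T ((T ^ (n+1)) y) := by rw [pow_succ']; rfl
          rw [a2, a1]
          exact hTsymm ((T ^ n) y) (T ((T ^ n) y))
        have e2 : ‖(T ^ (n+1)) y‖ ^ 2 = re ⟪(T ^ (n+1)) y, (T ^ (n+1)) y⟫ :=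
          (inner_self_eq_norm_sq _).symm
        rw [e2, e1]
        exact (re_le_norm _).trans (norm_inner_le_norm _ _)
      have hstep := lc_aux β M hβ1 (fun n => ‖(T ^ n) y‖) hpos hconv hMy
      intro n
      induction n with
      | zero => simp
      | succ n ih =>
        calc ‖(T ^ (n+1)) y‖ ≤ β * ‖(T ^ n) y‖ := hstep n
          _ ≤ β * (β ^ n * ‖y‖) :=
            mul_le_mul_of_nonneg_left ih (le_trans zero_le_one hβ1)
          _ = β ^ (n+1) * ‖y‖ := by ring
    -- T-invariance and C-invariance of F applied to P u
    have hTinv : ∀ u : E, T (P u) ∈ FsetB T β := by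
      intro u
      apply hF _ (β * ‖P u‖)
      intro n
      have : ‖(T ^ n) (T (P u))‖ = ‖(T ^ (n+1)) (P u)‖ := by
        rw [pow_succ]; rfl
      rw [this]
      calc ‖(T ^ (n+1)) (P u)‖ ≤ β ^ (n+1) * ‖P u‖ := hPmem u (n+1)
        _ = β * ‖P u‖ * β ^ n := by ring
    have hTnpowC : ∀ (n : ℕ) (u : E), (T ^ n) (C u) = C ((T ^ n) u) := by
      intro n
      induction n with
      | zero => intro u; rfl
      | succ n ih =>
        intro u
        have a1 : (T ^ (n+1)) (C u) = (T ^ n) (T (C u)) := by rw [pow_succ]; rfl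
        have a2 : (T ^ (n+1)) u = (T ^ n) (T u) := by rw [pow_succ]; rfl
        rw [a1, hTC, ih, a2]
    have hCinv : ∀ u : E, C (P u) ∈ FsetB T β := by
      intro u
      apply hF _ (‖C‖ * ‖P u‖)
      intro n
      rw [hTnpowC]
      calc ‖C ((T ^ n) (P u))‖ ≤ ‖C‖ * ‖(T ^ n) (P u)‖ := C.le_opNorm _
        _ ≤ ‖C‖ * (β ^ n * ‖P u‖) :=
          mul_le_mul_of_nonneg_left (hPmem u n) (norm_nonneg C)
        _ = ‖C‖ * ‖P u‖ * β ^ n := by ring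
    -- P commutes with T and with C
    have hPT : ∀ u : E, P (T u) = T (P u) := key T hTsymm hTinv
    have hPC : ∀ u : E, P (C u) = C (P u) := key C hCsymm hCinv
    -- P commutes with B
    have hPB : ∀ u : E, P (B u) = B (P u) := by
      intro u
      have h1 := hPT u
      rw [hTapp, hTapp, map_add, P.map_smul] at h1
      exact add_right_cancel h1
    -- final assembly
    obtain ⟨h2x, h3x⟩ := L2 x
    obtain ⟨h2pax, h3pax⟩ := L2 (P (A ⟨x, hx⟩))
    have hPxdecomp : P x
        = A ⟨C (P (A ⟨x, hx⟩)), hCdom (P (A ⟨x, hx⟩))⟩ + C (P x) := by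
      have d1 : x = A ⟨A ⟨C x, hCdom x⟩, h2x⟩ + C x := hdecomp x h2x
      have d2 : A ⟨A ⟨C x, hCdom x⟩, h2x⟩ = B (A ⟨x, hx⟩) := by
        have e : (⟨A ⟨C x, hCdom x⟩, h2x⟩ : A.domain)
            = ⟨C (A ⟨x, hx⟩), hCdom (A ⟨x, hx⟩)⟩ := Subtype.ext (hCA x hx).symm
        rw [e, ← hB (A ⟨x, hx⟩)]
      have d3 : P x = P (B (A ⟨x, hx⟩)) + P (C x) := by
        conv_lhs => rw [d1, d2]
        rw [map_add]
      conv_lhs => rw [d3, hPB, hPC, hB (P (A ⟨x, hx⟩))]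
    have hPxmem : P x ∈ A.domain := by
      rw [hPxdecomp]
      exact A.domain.add_mem h2pax (hCdom (P x))
    refine ⟨hPxmem, ?_⟩
    have hsplit : (⟨P x, hPxmem⟩ : A.domain)
        = ⟨A ⟨C (P (A ⟨x, hx⟩)), hCdom (P (A ⟨x, hx⟩))⟩, h2pax⟩
          + ⟨C (P x), hCdom (P x)⟩ := Subtype.ext (by simpa using hPxdecomp)
    rw [hsplit, A.map_add, h3pax]
    have hfinal : A ⟨C (P x), hCdom (P x)⟩ = C (P (A ⟨x, hx⟩)) := by
      calc A ⟨C (P x), hCdom (P x)⟩ = B (P x) := (hB (P x)).symm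
        _ = P (B x) := (hPB x).symm
        _ = P (C (A ⟨x, hx⟩)) := by rw [hB x, ← hCA x hx]
        _ = C (P (A ⟨x, hx⟩)) := hPC (A ⟨x, hx⟩)
    rw [hfinal, sub_add_cancel]
end

section
/- Let A ≥ 0 be self-adjoint and define E(λ) as the orthogonal projection onto F(A,λ) for λ ∈ ℝ (with E(λ)=0 for λ ≤ 0). Then (E(λ)) is a spectral family: it is increasing, right-continuous, E(λ) → 0 as λ → −∞, and E(λ) → I strongly as λ → +∞. -/
open InnerProductSpace RCLike Filter Topology MeasureTheory Set

variable {𝕜 E : Type*} [RCLike 𝕜] [NormedAddCommGroup E] [InnerProductSpace 𝕜 E]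

local notation "⟪" x ", " y "⟫" => @inner 𝕜 _ _ x y

section AuxOps

/-! ### Auxiliary operator lemmas -/

/-- symmetric bounded operator -/
def OpSym (T : E →L[𝕜] E) : Prop := ∀ x y : E, ⟪T x, y⟫ = ⟪x, T y⟫

lemma OpSym.add {T S : E →L[𝕜] E} (hT : OpSym T) (hS : OpSym S) : OpSym (T + S) := by
  intro x y; simp [inner_add_left, inner_add_right, hT x y, hS x y]

lemma OpSym.sub {T S : E →L[𝕜] E} (hT : OpSym T) (hS : OpSym S) : OpSym (T - S) := by
  intro x y; simp [inner_sub_left, inner_sub_right, hT x y, hS x y]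

lemma OpSym.one : OpSym (1 : E →L[𝕜] E) := fun _ _ => rfl

lemma OpSym.smul {T : E →L[𝕜] E} (hT : OpSym T) (c : ℝ) : OpSym ((c : 𝕜) • T) := by
  intro x y
  show ⟪(c:𝕜) • T x, y⟫ = ⟪x, (c:𝕜) • T y⟫
  rw [inner_smul_left, inner_smul_right, hT x y, RCLike.conj_ofReal]

lemma OpSym.mul {T S : E →L[𝕜] E} (hT : OpSym T) (hS : OpSym S) (h : T * S = S * T) :
    OpSym (T * S) := by
  intro x y
  show ⟪T (S x), y⟫ = ⟪x, (T * S) y⟫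
  rw [h]
  show ⟪T (S x), y⟫ = ⟪x, S (T y)⟫
  rw [hT (S x) y, hS x (T y)]

/-- numerical radius bound for symmetric operators -/
lemma OpSym.norm_apply_le {T : E →L[𝕜] E} (hT : OpSym T) {M : ℝ} (hM : 0 ≤ M)
    (hb : ∀ x : E, |re ⟪T x, x⟫| ≤ M * ‖x‖ ^ 2) (x : E) : ‖T x‖ ≤ M * ‖x‖ := by
  rcases eq_or_ne (T x) 0 with h0 | h0
  · rw [h0, norm_zero]; positivity
  have hx : x ≠ 0 := by rintro rfl; simp at h0
  have hxn : (0:ℝ) < ‖x‖ := norm_pos_iff.2 hx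
  have hTxn : (0:ℝ) < ‖T x‖ := norm_pos_iff.2 h0
  set c : ℝ := ‖x‖ / ‖T x‖ with hc
  have hcpos : 0 < c := div_pos hxn hTxn
  set y : E := (c : 𝕜) • T x with hy
  have hyx : ‖y‖ = ‖x‖ := by
    rw [hy, norm_smul]
    simp only [RCLike.norm_ofReal, abs_of_pos hcpos]
    field_simp [hc]
    rw [hc, div_mul_cancel₀ _ hTxn.ne']
  -- re ⟪T x, y⟫ = c * ‖T x‖^2
  have hre : re ⟪T x, y⟫ = c * ‖T x‖ ^ 2 := by
    rw [hy, inner_smul_right]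
    rw [RCLike.re_ofReal_mul]
    rw [← @inner_self_eq_norm_sq 𝕜]
  -- polarization: 4 re⟪T x, y⟫ = re⟪T(x+y), x+y⟫ - re⟪T(x-y), x-y⟫
  have hpol : 4 * re ⟪T x, y⟫ = re ⟪T (x + y), x + y⟫ - re ⟪T (x - y), x - y⟫ := by
    have e1 : ⟪T (x + y), x + y⟫ = ⟪T x, x⟫ + ⟪T x, y⟫ + ⟪T y, x⟫ + ⟪T y, y⟫ := by
      rw [map_add]; rw [inner_add_left, inner_add_right, inner_add_right]; ring
    have e2 : ⟪T (x - y), x - y⟫ = ⟪T x, x⟫ - ⟪T x, y⟫ - ⟪T y, x⟫ + ⟪T y, y⟫ := by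
      rw [map_sub]; rw [inner_sub_left, inner_sub_right, inner_sub_right]; ring
    have e3 : re ⟪T y, x⟫ = re ⟪T x, y⟫ := by
      rw [hT y x, ← inner_conj_symm]
      exact RCLike.conj_re _
    rw [e1, e2]
    simp only [map_add, map_sub]
    rw [e3]; ring
  have hpar2 : ‖x + y‖ ^ 2 + ‖x - y‖ ^ 2 = 4 * ‖x‖ ^ 2 := by
    have hp := parallelogram_law_with_norm 𝕜 x y
    rw [hyx] at hp
    simp only [pow_two]; linarith
  have hbound : 4 * re ⟪T x, y⟫ ≤ 4 * (M * ‖x‖ ^ 2) := by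
    rw [hpol]
    have h1 := (abs_le.1 (hb (x + y))).2
    have h2 := (abs_le.1 (hb (x - y))).1
    calc re ⟪T (x + y), x + y⟫ - re ⟪T (x - y), x - y⟫
        ≤ M * ‖x + y‖ ^ 2 + M * ‖x - y‖ ^ 2 := by linarith
    _ = M * (‖x + y‖ ^ 2 + ‖x - y‖ ^ 2) := by ring
    _ = M * (4 * ‖x‖ ^ 2) := by rw [hpar2]
    _ = 4 * (M * ‖x‖ ^ 2) := by ring
  rw [hre] at hbound
  have hxt : ‖x‖ * ‖T x‖ ≤ M * ‖x‖ ^ 2 := by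
    have hceq : c * ‖T x‖ ^ 2 = ‖x‖ * ‖T x‖ := by
      rw [hc]; field_simp
    linarith [hbound]
  have h3 : ‖x‖ * ‖T x‖ ≤ ‖x‖ * (M * ‖x‖) := hxt.trans_eq (by ring)
  exact le_of_mul_le_mul_left h3 hxn

/-- generalized Cauchy-Schwarz for positive symmetric operators -/
lemma OpSym.cauchy_schwarz {C : E →L[𝕜] E} (hC : OpSym C)
    (hpos : ∀ x : E, 0 ≤ re ⟪C x, x⟫) (x y : E) :
    (re ⟪C x, y⟫) ^ 2 ≤ re ⟪C x, x⟫ * re ⟪C y, y⟫ := by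
  set a : ℝ := re ⟪C y, y⟫ with ha
  set b : ℝ := re ⟪C x, y⟫ with hb
  set d : ℝ := re ⟪C x, x⟫ with hd
  have key : ∀ t : ℝ, 0 ≤ d - 2 * t * b + t ^ 2 * a := by
    intro t
    have h := hpos (x - (t : 𝕜) • y)
    have hyx : re ⟪C y, x⟫ = b := by
      rw [hb, hC y x, ← inner_conj_symm]
      exact RCLike.conj_re _
    have e : ⟪C (x - (t:𝕜) • y), x - (t:𝕜) • y⟫
        = ⟪C x, x⟫ - (t:𝕜) * ⟪C x, y⟫ - (t:𝕜) * ⟪C y, x⟫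
          + (t:𝕜) * ((t:𝕜) * ⟪C y, y⟫) := by
      rw [map_sub, C.map_smul]
      rw [inner_sub_left, inner_sub_right, inner_sub_right,
        inner_smul_right, inner_smul_left, inner_smul_left, inner_smul_right,
        RCLike.conj_ofReal]
      ring
    rw [e] at h
    simp only [map_sub, map_add, RCLike.re_ofReal_mul] at h
    rw [hyx] at h
    nlinarith [h]
  have hd0 : 0 ≤ d := hpos x
  have ha0 : 0 ≤ a := hpos y
  rcases eq_or_lt_of_le ha0 with ha' | ha'
  · -- a = 0 forces b = 0
    have hb0 : b = 0 := by
      by_contra hbne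
      have := key ((d + 1) / (2 * b))
      rw [← ha'] at this
      have h2 : 2 * ((d + 1) / (2 * b)) * b = d + 1 := by field_simp
      nlinarith [this]
    rw [hb0, ← ha']; nlinarith
  · have := key (b / a)
    have h2 : d - 2 * (b / a) * b + (b / a) ^ 2 * a = d - b ^ 2 / a := by
      field_simp; ring
    rw [h2] at this
    have h3 : b ^ 2 / a ≤ d := by linarith
    have h4 := (div_le_iff₀ ha').1 h3
    linarith

/-- `‖C x‖ ^ 2 ≤ ‖C‖ * re ⟪C x, x⟫` for positive symmetric `C`. -/
lemma OpSym.norm_sq_le {C : E →L[𝕜] E} (hC : OpSym C)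
    (hpos : ∀ x : E, 0 ≤ re ⟪C x, x⟫) (x : E) :
    ‖C x‖ ^ 2 * ‖C x‖ ^ 2 ≤ ‖C‖ * re ⟪C x, x⟫ * ‖C x‖ ^ 2 := by
  have h := hC.cauchy_schwarz hpos x (C x)
  have e1 : re ⟪C x, C x⟫ = ‖C x‖ ^ 2 := by rw [← @inner_self_eq_norm_sq 𝕜]
  rw [e1] at h
  have h2 : re ⟪C (C x), C x⟫ ≤ ‖C‖ * ‖C x‖ ^ 2 := by
    calc re ⟪C (C x), C x⟫ ≤ ‖(⟪C (C x), C x⟫ : 𝕜)‖ := RCLike.re_le_norm _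
    _ ≤ ‖C (C x)‖ * ‖C x‖ := norm_inner_le_norm _ _
    _ ≤ (‖C‖ * ‖C x‖) * ‖C x‖ := by
        have := C.le_opNorm (C x)
        exact mul_le_mul_of_nonneg_right this (norm_nonneg _)
    _ = ‖C‖ * ‖C x‖ ^ 2 := by ring
  nlinarith [hpos x, norm_nonneg (C x), sq_nonneg (‖C x‖)]

lemma OpSym.norm_apply_sq_le {C : E →L[𝕜] E} (hC : OpSym C)
    (hpos : ∀ x : E, 0 ≤ re ⟪C x, x⟫) (x : E) :
    ‖C x‖ ^ 2 ≤ ‖C‖ * re ⟪C x, x⟫ := by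
  rcases eq_or_ne (C x) 0 with h0 | h0
  · rw [h0, norm_zero]
    simpa using mul_nonneg (norm_nonneg C) (hpos x)
  have := hC.norm_sq_le hpos x
  have hpos2 : (0:ℝ) < ‖C x‖ ^ 2 := pow_pos (norm_pos_iff.2 h0) 2
  exact le_of_mul_le_mul_right this hpos2


lemma re_inner_self_apply {T : E →L[𝕜] E} (hT : OpSym T) (z : E) :
    re ⟪T (T z), z⟫ = ‖T z‖ ^ 2 := by
  rw [hT (T z) z, ← @inner_self_eq_norm_sq 𝕜]

/-- product of commuting positive symmetric operators is positive (normalized core). -/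
lemma opPos_mul_aux {C D : E →L[𝕜] E} (hCs : OpSym C) (hDs : OpSym D)
    (hCp : ∀ z : E, 0 ≤ re ⟪C z, z⟫) (hC1 : ∀ z : E, re ⟪C z, z⟫ ≤ ‖z‖ ^ 2)
    (hDp : ∀ z : E, 0 ≤ re ⟪D z, z⟫)
    (hcomm : C * D = D * C) (x : E) : 0 ≤ re ⟪D (C x), x⟫ := by
  classical
  set f : (E →L[𝕜] E) → (E →L[𝕜] E) := fun t => t - t * t with hf
  set c : ℕ → (E →L[𝕜] E) := fun n => f^[n] C with hcdef
  have hc0 : c 0 = C := rfl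
  have hcsucc : ∀ n, c (n + 1) = c n - c n * c n := by
    intro n
    show f^[n + 1] C = _
    rw [Function.iterate_succ_apply']
  have hinv : ∀ n, OpSym (c n) ∧ (c n * D = D * c n) ∧
      (∀ z : E, 0 ≤ re ⟪(c n) z, z⟫) ∧ (∀ z : E, re ⟪(c n) z, z⟫ ≤ ‖z‖ ^ 2) := by
    intro n
    induction n with
    | zero => exact ⟨hCs, hcomm, hCp, hC1⟩
    | succ n ih =>
      obtain ⟨hs, hcm, hp, h1⟩ := ih
      have hs1 : OpSym (1 - c n) := OpSym.one.sub hs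
      have hs2 : OpSym (c n * c n) := hs.mul hs rfl
      have hsym' : OpSym (c (n + 1)) := by rw [hcsucc]; exact hs.sub hs2
      have hcm2 : (c n * c n) * D = D * (c n * c n) := by
        rw [mul_assoc, hcm, ← mul_assoc, hcm, mul_assoc]
      have hcm' : c (n + 1) * D = D * c (n + 1) := by
        rw [hcsucc, sub_mul, mul_sub, hcm, hcm2]
      have hone : ∀ z : E, 0 ≤ re ⟪(1 - c n) z, z⟫ := by
        intro z
        have e : (1 - c n) z = z - c n z := rfl
        rw [e, inner_sub_left, map_sub]
        have e2 : re ⟪z, z⟫ = ‖z‖ ^ 2 := by rw [@inner_self_eq_norm_sq 𝕜]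
        rw [e2]
        linarith [h1 z]
      have hp' : ∀ z : E, 0 ≤ re ⟪(c (n + 1)) z, z⟫ := by
        intro z
        have hid : c (n + 1)
            = c n * (1 - c n) * c n + (1 - c n) * c n * (1 - c n) := by
          rw [hcsucc]; noncomm_ring
        rw [hid]
        have eapp : (c n * (1 - c n) * c n + (1 - c n) * c n * (1 - c n)) z
            = c n ((1 - c n) (c n z)) + (1 - c n) (c n ((1 - c n) z)) := rfl
        rw [eapp, inner_add_left, map_add]
        have e1 : re ⟪c n ((1 - c n) (c n z)), z⟫ = re ⟪(1 - c n) (c n z), c n z⟫ := by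
          rw [hs ((1 - c n) (c n z)) z]
        have e2 : re ⟪(1 - c n) (c n ((1 - c n) z)), z⟫
            = re ⟪c n ((1 - c n) z), (1 - c n) z⟫ := by
          rw [hs1 (c n ((1 - c n) z)) z]
        rw [e1, e2]
        have := hone (c n z)
        have := hp ((1 - c n) z)
        linarith
      have h1' : ∀ z : E, re ⟪(c (n + 1)) z, z⟫ ≤ ‖z‖ ^ 2 := by
        intro z
        have e : (c (n + 1)) z = c n z - c n (c n z) := by rw [hcsucc]; rfl
        rw [e, inner_sub_left, map_sub, re_inner_self_apply hs]
        have := h1 z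
        nlinarith [sq_nonneg (‖c n z‖)]
      exact ⟨hsym', hcm', hp', h1'⟩
  -- telescoping identity for a general operator W commuting with all c n
  have hstep : ∀ (W : E →L[𝕜] E) (n : ℕ),
      re ⟪W (c n x), x⟫ - re ⟪W (c (n + 1) x), x⟫ = re ⟪W (c n (c n x)), x⟫ := by
    intro W n
    have e : c (n + 1) x = c n x - c n (c n x) := by rw [hcsucc]; rfl
    rw [e, map_sub, inner_sub_left, map_sub]
    ring
  have tele : ∀ (W : E →L[𝕜] E) (n : ℕ),
      re ⟪W (C x), x⟫
        = (∑ k ∈ Finset.range n, re ⟪W (c k (c k x)), x⟫) + re ⟪W (c n x), x⟫ := by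
    intro W n
    induction n with
    | zero => simp [hc0]
    | succ n ih =>
      rw [Finset.sum_range_succ, ih]
      have := hstep W n
      linarith
  -- summability of ‖c k x‖ ^ 2
  have hsum_le : ∀ n, (∑ k ∈ Finset.range n, ‖c k x‖ ^ 2) ≤ re ⟪C x, x⟫ := by
    intro n
    have h1 := tele 1 n
    simp only [ContinuousLinearMap.one_apply] at h1
    have e : ∀ k, re ⟪c k (c k x), x⟫ = ‖c k x‖ ^ 2 := fun k =>
      re_inner_self_apply (hinv k).1 x
    rw [Finset.sum_congr rfl (fun k _ => e k)] at h1
    have := (hinv n).2.2.1 x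
    linarith
  have hsummable : Summable (fun k => ‖c k x‖ ^ 2) :=
    summable_of_sum_range_le (fun k => sq_nonneg _) hsum_le
  have hsq0 : Tendsto (fun n => ‖c n x‖ ^ 2) atTop (𝓝 0) := hsummable.tendsto_atTop_zero
  have hn0 : Tendsto (fun n => ‖c n x‖) atTop (𝓝 0) := by
    have h := (Real.continuous_sqrt.tendsto 0).comp hsq0
    simp only [Real.sqrt_zero] at h
    convert h using 2 with n
    · exact (Real.sqrt_sq (norm_nonneg _)).symm
  have hlim : Tendsto (fun n => re ⟪D (c n x), x⟫) atTop (𝓝 0) := by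
    apply squeeze_zero_norm (a := fun n => ‖D‖ * ‖x‖ * ‖c n x‖)
    · intro n
      calc ‖re ⟪D (c n x), x⟫‖ ≤ ‖(⟪D (c n x), x⟫ : 𝕜)‖ := by
            exact RCLike.norm_re_le_norm _
      _ ≤ ‖D (c n x)‖ * ‖x‖ := norm_inner_le_norm _ _
      _ ≤ (‖D‖ * ‖c n x‖) * ‖x‖ :=
            mul_le_mul_of_nonneg_right (D.le_opNorm _) (norm_nonneg _)
      _ = ‖D‖ * ‖x‖ * ‖c n x‖ := by ring
    · simpa using (tendsto_const_nhds (x := ‖D‖ * ‖x‖)).mul hn0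
  -- each term of the D-telescope is nonnegative
  have hterm : ∀ k, 0 ≤ re ⟪D (c k (c k x)), x⟫ := by
    intro k
    obtain ⟨hs, hcm, _, _⟩ := hinv k
    have e : D (c k (c k x)) = c k (D (c k x)) := by
      have := congrArg (fun (T : E →L[𝕜] E) => T (c k x)) hcm
      exact this.symm
    rw [e, hs (D (c k x)) x]
    exact hDp (c k x)
  -- conclude
  have hS : Tendsto (fun n => re ⟪D (C x), x⟫ - re ⟪D (c n x), x⟫) atTop
      (𝓝 (re ⟪D (C x), x⟫)) := by
    simpa using (tendsto_const_nhds (x := re ⟪D (C x), x⟫)).sub hlim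
  have hSnonneg : ∀ n, 0 ≤ re ⟪D (C x), x⟫ - re ⟪D (c n x), x⟫ := by
    intro n
    have h1 := tele D n
    have : re ⟪D (C x), x⟫ - re ⟪D (c n x), x⟫
        = ∑ k ∈ Finset.range n, re ⟪D (c k (c k x)), x⟫ := by linarith
    rw [this]
    exact Finset.sum_nonneg (fun k _ => hterm k)
  exact ge_of_tendsto' hS hSnonneg

/-- product of commuting positive symmetric operators is positive. -/
lemma opPos_mul {C D : E →L[𝕜] E} (hCs : OpSym C) (hDs : OpSym D)
    (hCp : ∀ z : E, 0 ≤ re ⟪C z, z⟫) (hDp : ∀ z : E, 0 ≤ re ⟪D z, z⟫)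
    (hcomm : C * D = D * C) (x : E) : 0 ≤ re ⟪C (D x), x⟫ := by
  rcases eq_or_ne C 0 with rfl | hC0
  · simp
  have hN : (0:ℝ) < ‖C‖ := norm_pos_iff.2 hC0
  set C' : E →L[𝕜] E := ((‖C‖⁻¹ : ℝ) : 𝕜) • C with hC'
  have hC's : OpSym C' := hCs.smul _
  have happ : ∀ z : E, C' z = ((‖C‖⁻¹ : ℝ) : 𝕜) • C z := fun z => rfl
  have hre : ∀ z w : E, re ⟪C' z, w⟫ = ‖C‖⁻¹ * re ⟪C z, w⟫ := by
    intro z w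
    rw [happ, inner_smul_left, RCLike.conj_ofReal, RCLike.re_ofReal_mul]
  have hC'p : ∀ z : E, 0 ≤ re ⟪C' z, z⟫ := by
    intro z; rw [hre]; exact mul_nonneg (by positivity) (hCp z)
  have hC'1 : ∀ z : E, re ⟪C' z, z⟫ ≤ ‖z‖ ^ 2 := by
    intro z
    rw [hre]
    have h1 : re ⟪C z, z⟫ ≤ ‖C‖ * ‖z‖ ^ 2 := by
      calc re ⟪C z, z⟫ ≤ ‖(⟪C z, z⟫ : 𝕜)‖ := RCLike.re_le_norm _
      _ ≤ ‖C z‖ * ‖z‖ := norm_inner_le_norm _ _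
      _ ≤ (‖C‖ * ‖z‖) * ‖z‖ := mul_le_mul_of_nonneg_right (C.le_opNorm _) (norm_nonneg _)
      _ = ‖C‖ * ‖z‖ ^ 2 := by ring
    calc ‖C‖⁻¹ * re ⟪C z, z⟫ ≤ ‖C‖⁻¹ * (‖C‖ * ‖z‖ ^ 2) :=
          mul_le_mul_of_nonneg_left h1 (by positivity)
    _ = ‖z‖ ^ 2 := by field_simp
  have hcomm' : C' * D = D * C' := by
    rw [hC', smul_mul_assoc, mul_smul_comm, hcomm]
  have h := opPos_mul_aux hC's hDs hC'p hC'1 hDp hcomm' x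
  have e : re ⟪D (C' x), x⟫ = ‖C‖⁻¹ * re ⟪D (C x), x⟫ := by
    rw [happ, D.map_smul, inner_smul_left, RCLike.conj_ofReal, RCLike.re_ofReal_mul]
  rw [e] at h
  have h2 : 0 ≤ re ⟪D (C x), x⟫ := by
    by_contra hneg
    push_neg at hneg
    nlinarith [inv_pos.2 hN]
  -- transfer to ⟪C (D x), x⟫ using commutativity and symmetry
  have e2 : C (D x) = D (C x) := by
    have := congrArg (fun (T : E →L[𝕜] E) => T x) hcomm
    exact this
  rw [e2]
  exact h2


lemma re_sub_apply (S T : E →L[𝕜] E) (v : E) :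
    re ⟪(S - T) v, v⟫ = re ⟪S v, v⟫ - re ⟪T v, v⟫ := by
  have e : (S - T) v = S v - T v := rfl
  rw [e, inner_sub_left, map_sub]

lemma re_add_apply (S T : E →L[𝕜] E) (v : E) :
    re ⟪(S + T) v, v⟫ = re ⟪S v, v⟫ + re ⟪T v, v⟫ := by
  have e : (S + T) v = S v + T v := rfl
  rw [e, inner_add_left, map_add]

lemma re_one_apply (v : E) : re ⟪(1 : E →L[𝕜] E) v, v⟫ = ‖v‖ ^ 2 := by
  have e : (1 : E →L[𝕜] E) v = v := rfl
  rw [e, @inner_self_eq_norm_sq 𝕜]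

lemma re_smul_apply (c : ℝ) (T : E →L[𝕜] E) (v w : E) :
    re ⟪((c : 𝕜) • T) v, w⟫ = c * re ⟪T v, w⟫ := by
  have e : ((c : 𝕜) • T) v = (c : 𝕜) • T v := rfl
  rw [e, inner_smul_left, RCLike.conj_ofReal, RCLike.re_ofReal_mul]

lemma comm_helper {a b : E →L[𝕜] E} (h : a * b = b * a) :
    (a + b) * (a - b) = (a - b) * (a + b) := by
  rw [add_mul, mul_sub, mul_sub, sub_mul, mul_add, mul_add, h]
  abel

lemma opNorm_le_one {T : E →L[𝕜] E} (hT : OpSym T) (hpos : ∀ z : E, 0 ≤ re ⟪T z, z⟫)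
    (hle : ∀ z : E, re ⟪T z, z⟫ ≤ ‖z‖ ^ 2) : ‖T‖ ≤ 1 := by
  apply ContinuousLinearMap.opNorm_le_bound _ zero_le_one
  intro x
  rw [one_mul]
  have := hT.norm_apply_le (M := 1) zero_le_one (fun z => by
    rw [abs_le]
    constructor
    · linarith [hpos z, sq_nonneg ‖z‖]
    · linarith [hle z]) x
  simpa using this

/-- strong limit of a decreasing sequence of positive symmetric contractions -/
lemma exists_strong_limit [CompleteSpace E] (c : ℕ → E →L[𝕜] E)
    (hsym : ∀ n, OpSym (c n))
    (hpos : ∀ n (z : E), 0 ≤ re ⟪c n z, z⟫)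
    (hbd : ∀ n (z : E), re ⟪c n z, z⟫ ≤ ‖z‖ ^ 2)
    (hdec : ∀ n (z : E), re ⟪c (n + 1) z, z⟫ ≤ re ⟪c n z, z⟫) :
    ∃ Z : E →L[𝕜] E, ∀ x, Tendsto (fun n => c n x) atTop (𝓝 (Z x)) := by
  have hanti : ∀ z : E, Antitone (fun n => re ⟪c n z, z⟫) := fun z =>
    antitone_nat_of_succ_le (fun n => hdec n z)
  have hnorm : ∀ n, ‖c n‖ ≤ 1 := fun n => opNorm_le_one (hsym n) (hpos n) (hbd n)
  have hkey : ∀ (m n : ℕ), m ≤ n → ∀ x : E,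
      ‖c m x - c n x‖ ^ 2 ≤ 2 * (re ⟪c m x, x⟫ - re ⟪c n x, x⟫) := by
    intro m n hmn x
    set T : E →L[𝕜] E := c m - c n with hT
    have hTs : OpSym T := (hsym m).sub (hsym n)
    have hTp : ∀ z : E, 0 ≤ re ⟪T z, z⟫ := by
      intro z
      rw [hT, re_sub_apply]
      have := hanti z hmn
      linarith
    have h1 := hTs.norm_apply_sq_le hTp x
    have hTnorm : ‖T‖ ≤ 2 := by
      calc ‖T‖ ≤ ‖c m‖ + ‖c n‖ := norm_sub_le _ _
      _ ≤ 2 := by linarith [hnorm m, hnorm n]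
    have e : T x = c m x - c n x := rfl
    have e2 : re ⟪T x, x⟫ = re ⟪c m x, x⟫ - re ⟪c n x, x⟫ := by rw [hT, re_sub_apply]
    rw [e2, e] at h1
    have hge : 0 ≤ re ⟪c m x, x⟫ - re ⟪c n x, x⟫ := by
      have := hanti x hmn
      linarith
    nlinarith [h1, norm_nonneg T]
  have hcauchy : ∀ x : E, CauchySeq (fun n => c n x) := by
    intro x
    rw [Metric.cauchySeq_iff']
    intro ε hε
    -- the real sequence re ⟪c n x, x⟫ is antitone and bounded below, hence Cauchy
    have hconv : ∃ L, Tendsto (fun n => re ⟪c n x, x⟫) atTop (𝓝 L) := by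
      refine ⟨_, tendsto_atTop_ciInf (hanti x) ⟨0, ?_⟩⟩
      rintro r ⟨n, rfl⟩
      exact hpos n x
    obtain ⟨L, hL⟩ := hconv
    have hcr : CauchySeq (fun n => re ⟪c n x, x⟫) := hL.cauchySeq
    rw [Metric.cauchySeq_iff'] at hcr
    obtain ⟨N, hN⟩ := hcr (ε ^ 2 / 2) (by positivity)
    refine ⟨N, fun n hn => ?_⟩
    have h2 := hN n hn
    rw [Real.dist_eq, abs_lt] at h2
    have h3 := hkey N n hn x
    rw [dist_eq_norm]
    have h4 : ‖c n x - c N x‖ ^ 2 < ε ^ 2 := by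
      have e : ‖c n x - c N x‖ = ‖c N x - c n x‖ := by rw [norm_sub_rev]
      rw [e]
      nlinarith [h3]
    nlinarith [norm_nonneg (c n x - c N x), hε]
  choose Zf hZf using fun x => cauchySeq_tendsto_of_complete (hcauchy x)
  have hadd : ∀ x y : E, Zf (x + y) = Zf x + Zf y := by
    intro x y
    have h1 : Tendsto (fun n => c n (x + y)) atTop (𝓝 (Zf x + Zf y)) := by
      have := (hZf x).add (hZf y)
      simpa using this
    exact tendsto_nhds_unique (hZf (x + y)) h1
  have hsmul : ∀ (a : 𝕜) (x : E), Zf (a • x) = a • Zf x := by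
    intro a x
    have h1 : Tendsto (fun n => c n (a • x)) atTop (𝓝 (a • Zf x)) := by
      have := (hZf x).const_smul a
      simpa using this
    exact tendsto_nhds_unique (hZf (a • x)) h1
  have hbound : ∀ x : E, ‖Zf x‖ ≤ 1 * ‖x‖ := by
    intro x
    rw [one_mul]
    have h1 : Tendsto (fun n => ‖c n x‖) atTop (𝓝 ‖Zf x‖) := (hZf x).norm
    apply le_of_tendsto h1
    filter_upwards with n
    calc ‖c n x‖ ≤ ‖c n‖ * ‖x‖ := (c n).le_opNorm x
    _ ≤ 1 * ‖x‖ := mul_le_mul_of_nonneg_right (hnorm n) (norm_nonneg x)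
    _ = ‖x‖ := one_mul _
  refine ⟨LinearMap.mkContinuous ⟨⟨Zf, hadd⟩, hsmul⟩ 1 hbound, fun x => hZf x⟩

/-- existence of a positive symmetric square root commuting with everything that commutes
with the base operator -/
lemma exists_sqrt [CompleteSpace E] (X : E →L[𝕜] E) (hXs : OpSym X)
    (hXp : ∀ z : E, 0 ≤ re ⟪X z, z⟫) (hX1 : ∀ z : E, re ⟪X z, z⟫ ≤ ‖z‖ ^ 2) :
    ∃ S : E →L[𝕜] E, OpSym S ∧ (∀ z : E, 0 ≤ re ⟪S z, z⟫) ∧ S * S = X ∧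
      (∀ W : E →L[𝕜] E, W * X = X * W → W * S = S * W) := by
  classical
  set f : (E →L[𝕜] E) → (E →L[𝕜] E) :=
    fun t => (((1:ℝ)/2 : ℝ) : 𝕜) • (t * t + (1 - X)) with hf
  set z : ℕ → (E →L[𝕜] E) := fun n => f^[n] 1 with hzdef
  have hz0 : z 0 = 1 := rfl
  have hzsucc : ∀ n, z (n + 1) = (((1:ℝ)/2 : ℝ) : 𝕜) • (z n * z n + (1 - X)) := by
    intro n
    show f^[n + 1] 1 = _
    rw [Function.iterate_succ_apply']
  have h1mXs : OpSym (1 - X) := OpSym.one.sub hXs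
  have h1mXp : ∀ v : E, 0 ≤ re ⟪(1 - X) v, v⟫ := by
    intro v; rw [re_sub_apply, re_one_apply]; linarith [hX1 v]
  have hsq_re : ∀ (T : E →L[𝕜] E), OpSym T → ∀ v : E,
      re ⟪(T * T) v, v⟫ = ‖T v‖ ^ 2 := by
    intro T hT v
    exact re_inner_self_apply hT v
  have hinv : ∀ n, OpSym (z n) ∧ (∀ W : E →L[𝕜] E, W * X = X * W → W * z n = z n * W) ∧
      (∀ v : E, 0 ≤ re ⟪z n v, v⟫) ∧ (∀ v : E, re ⟪z n v, v⟫ ≤ ‖v‖ ^ 2) ∧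
      (∀ v : E, 0 ≤ re ⟪(z n - z (n + 1)) v, v⟫) := by
    intro n
    induction n with
    | zero =>
      refine ⟨by rw [hz0]; exact OpSym.one, fun W _ => by rw [hz0, mul_one, one_mul],
        fun v => by rw [hz0, re_one_apply]; positivity,
        fun v => by rw [hz0, re_one_apply],
        fun v => ?_⟩
      rw [re_sub_apply, hzsucc 0, hz0, re_smul_apply, re_add_apply, one_mul,
        re_one_apply]
      rw [re_sub_apply, re_one_apply]
      linarith [hXp v]
    | succ n ih =>
      obtain ⟨hs, hcw, hp, h1, hd⟩ := ih
      have hs' : OpSym (z (n + 1)) := by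
        rw [hzsucc]
        exact ((hs.mul hs rfl).add (OpSym.one.sub hXs)).smul _
      have hcw' : ∀ W : E →L[𝕜] E, W * X = X * W → W * z (n + 1) = z (n + 1) * W := by
        intro W hW
        have hWz := hcw W hW
        have h2 : W * (z n * z n) = (z n * z n) * W := by
          rw [← mul_assoc, hWz, mul_assoc, hWz, ← mul_assoc]
        have h3 : W * (1 - X) = (1 - X) * W := by
          rw [mul_sub, sub_mul, mul_one, one_mul, hW]
        rw [hzsucc, mul_smul_comm, smul_mul_assoc, mul_add, add_mul, h2, h3]
      have hzX : z n * X = X * z n := (hcw X rfl).symm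
      have hzz : z n * z (n + 1) = z (n + 1) * z n := hcw' (z n) hzX
      have hcontr : ∀ v : E, ‖z n v‖ ≤ ‖v‖ := by
        intro v
        have := hs.norm_apply_le (M := 1) zero_le_one (fun w => by
          rw [abs_le]
          exact ⟨by linarith [hp w, sq_nonneg ‖w‖], by linarith [h1 w]⟩) v
        simpa using this
      have hp' : ∀ v : E, 0 ≤ re ⟪z (n + 1) v, v⟫ := by
        intro v
        rw [hzsucc, re_smul_apply, re_add_apply, hsq_re _ hs]
        linarith [h1mXp v, sq_nonneg ‖z n v‖]
      have h1' : ∀ v : E, re ⟪z (n + 1) v, v⟫ ≤ ‖v‖ ^ 2 := by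
        intro v
        rw [hzsucc, re_smul_apply, re_add_apply, hsq_re _ hs, re_sub_apply, re_one_apply]
        have h4 := hcontr v
        nlinarith [hXp v, norm_nonneg (z n v), norm_nonneg v]
      have hd' : ∀ v : E, 0 ≤ re ⟪(z (n + 1) - z (n + 2)) v, v⟫ := by
        intro v
        have expand : (z n + z (n + 1)) * (z n - z (n + 1))
            = z n * z n - z (n + 1) * z (n + 1)
              + (z (n + 1) * z n - z n * z (n + 1)) := by noncomm_ring
        have hop : z (n + 1) - z (n + 2)
            = (((1:ℝ)/2 : ℝ) : 𝕜) • ((z n + z (n + 1)) * (z n - z (n + 1))) := by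
          calc z (n + 1) - z (n + 2)
              = (((1:ℝ)/2 : ℝ) : 𝕜) • (z n * z n + (1 - X))
                - (((1:ℝ)/2 : ℝ) : 𝕜) • (z (n + 1) * z (n + 1) + (1 - X)) := by
                rw [← hzsucc n, ← hzsucc (n + 1)]
          _ = (((1:ℝ)/2 : ℝ) : 𝕜) • ((z n + z (n + 1)) * (z n - z (n + 1))) := by
                rw [← smul_sub]
                congr 1
                rw [expand, hzz]
                abel
        rw [hop, re_smul_apply]
        have hterm : 0 ≤ re ⟪((z n + z (n + 1)) * (z n - z (n + 1))) v, v⟫ := by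
          have hCs : OpSym (z n + z (n + 1)) := hs.add hs'
          have hDs : OpSym (z n - z (n + 1)) := hs.sub hs'
          have hCp : ∀ w : E, 0 ≤ re ⟪(z n + z (n + 1)) w, w⟫ := by
            intro w; rw [re_add_apply]; linarith [hp w, hp' w]
          have hcm : (z n + z (n + 1)) * (z n - z (n + 1))
              = (z n - z (n + 1)) * (z n + z (n + 1)) := comm_helper hzz
          exact opPos_mul hCs hDs hCp hd hcm v
        linarith
      exact ⟨hs', hcw', hp', h1', hd'⟩
  -- strong limit
  obtain ⟨Z, hZ⟩ := exists_strong_limit z (fun n => (hinv n).1) (fun n => (hinv n).2.2.1)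
    (fun n => (hinv n).2.2.2.1) (fun n v => by
      have := (hinv n).2.2.2.2 v
      rw [re_sub_apply] at this
      linarith)
  have hcontr : ∀ n (v : E), ‖z n v‖ ≤ ‖v‖ := by
    intro n v
    obtain ⟨hs, _, hp, h1, _⟩ := hinv n
    have := hs.norm_apply_le (M := 1) zero_le_one (fun w => by
      rw [abs_le]
      exact ⟨by linarith [hp w, sq_nonneg ‖w‖], by linarith [h1 w]⟩) v
    simpa using this
  have hZre : ∀ v w : E, Tendsto (fun n => re ⟪z n v, w⟫) atTop (𝓝 (re ⟪Z v, w⟫)) := by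
    intro v w
    exact (RCLike.continuous_re.tendsto _).comp ((hZ v).inner tendsto_const_nhds)
  have hZs : OpSym Z := by
    intro x y
    have h1 : Tendsto (fun n => (⟪z n x, y⟫ : 𝕜)) atTop (𝓝 ⟪Z x, y⟫) :=
      (hZ x).inner tendsto_const_nhds
    have h2 : Tendsto (fun n => (⟪z n x, y⟫ : 𝕜)) atTop (𝓝 ⟪x, Z y⟫) := by
      have h3 : (fun n => (⟪z n x, y⟫ : 𝕜)) = fun n => (⟪x, z n y⟫ : 𝕜) := by
        funext n; exact (hinv n).1 x y
      rw [h3]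
      exact tendsto_const_nhds.inner (hZ y)
    exact tendsto_nhds_unique h1 h2
  have hZ1 : ∀ v : E, re ⟪Z v, v⟫ ≤ ‖v‖ ^ 2 :=
    fun v => le_of_tendsto' (hZre v v) (fun n => (hinv n).2.2.2.1 v)
  have hZcomm : ∀ W : E →L[𝕜] E, W * X = X * W → W * Z = Z * W := by
    intro W hW
    ext x
    have h1 : Tendsto (fun n => W (z n x)) atTop (𝓝 (W (Z x))) :=
      (W.continuous.tendsto _).comp (hZ x)
    have h2 : Tendsto (fun n => W (z n x)) atTop (𝓝 (Z (W x))) := by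
      have h3 : (fun n => W (z n x)) = fun n => z n (W x) := by
        funext n
        exact congrArg (fun (T : E →L[𝕜] E) => T x) ((hinv n).2.1 W hW)
      rw [h3]
      exact hZ (W x)
    exact tendsto_nhds_unique h1 h2
  -- the fixed point identity
  have hhalf : (((1:ℝ)/2 : ℝ) : 𝕜) + (((1:ℝ)/2 : ℝ) : 𝕜) = 1 := by
    rw [← RCLike.ofReal_add]
    norm_num
  have hpt : ∀ (n : ℕ) (x : E), z (n + 1) x + z (n + 1) x = z n (z n x) + (x - X x) := by
    intro n x
    rw [hzsucc]
    have e : ((((1:ℝ)/2 : ℝ) : 𝕜) • (z n * z n + (1 - X))) x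
        = (((1:ℝ)/2 : ℝ) : 𝕜) • (z n (z n x) + (x - X x)) := rfl
    rw [e, ← add_smul, hhalf, one_smul]
  have hZZ : ∀ x : E, Tendsto (fun n => z n (z n x)) atTop (𝓝 (Z (Z x))) := by
    intro x
    rw [tendsto_iff_norm_sub_tendsto_zero]
    apply squeeze_zero_norm (a := fun n => ‖z n x - Z x‖ + ‖z n (Z x) - Z (Z x)‖)
    · intro n
      rw [Real.norm_eq_abs, abs_norm]
      calc ‖z n (z n x) - Z (Z x)‖
          ≤ ‖z n (z n x) - z n (Z x)‖ + ‖z n (Z x) - Z (Z x)‖ := norm_sub_le_norm_sub_add_norm_sub _ _ _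
      _ ≤ ‖z n x - Z x‖ + ‖z n (Z x) - Z (Z x)‖ := by
          have e : z n (z n x) - z n (Z x) = z n (z n x - Z x) := by rw [map_sub]
          rw [e]
          exact add_le_add (hcontr n _) le_rfl
    · have t1 : Tendsto (fun n => ‖z n x - Z x‖) atTop (𝓝 0) := by
        rw [← tendsto_iff_norm_sub_tendsto_zero]
        exact hZ x
      have t2 : Tendsto (fun n => ‖z n (Z x) - Z (Z x)‖) atTop (𝓝 0) := by
        rw [← tendsto_iff_norm_sub_tendsto_zero]
        exact hZ (Z x)
      simpa using t1.add t2
  have hid : ∀ x : E, Z x + Z x = Z (Z x) + (x - X x) := by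
    intro x
    have h1 : Tendsto (fun n => z (n + 1) x + z (n + 1) x) atTop (𝓝 (Z x + Z x)) := by
      have := ((hZ x).comp (tendsto_add_atTop_nat 1)).add ((hZ x).comp (tendsto_add_atTop_nat 1))
      simpa using this
    have h2 : Tendsto (fun n => z (n + 1) x + z (n + 1) x) atTop (𝓝 (Z (Z x) + (x - X x))) := by
      have h3 : (fun n => z (n + 1) x + z (n + 1) x) = fun n => z n (z n x) + (x - X x) := by
        funext n; exact hpt n x
      rw [h3]
      simpa using (hZZ x).add (tendsto_const_nhds (x := x - X x))
    exact tendsto_nhds_unique h1 h2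
  refine ⟨1 - Z, OpSym.one.sub hZs, ?_, ?_, ?_⟩
  · intro v
    rw [re_sub_apply, re_one_apply]
    linarith [hZ1 v]
  · ext x
    have e : ((1 - Z) * (1 - Z)) x = (x - Z x) - (Z x - Z (Z x)) := by
      show (1 - Z) ((1 - Z) x) = _
      have e1 : (1 - Z) x = x - Z x := rfl
      rw [e1]
      show (x - Z x) - Z (x - Z x) = _
      rw [map_sub]
    rw [e]
    have := hid x
    have e2 : X x = x - Z x - (Z x - Z (Z x)) := by
      have : Z (Z x) = Z x + Z x - (x - X x) := by rw [hid x]; abel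
      rw [this]; abel
    rw [← e2]
  · intro W hW
    have := hZcomm W hW
    rw [mul_sub, sub_mul, mul_one, one_mul, this]


/-- `S + T ≥ 0` when `S ≥ 0`, `S² = T²`, and `S`, `T` are commuting symmetric operators. -/
lemma pospart_core [CompleteSpace E] {S T : E →L[𝕜] E} (hSs : OpSym S) (hTs : OpSym T)
    (hSp : ∀ v : E, 0 ≤ re ⟪S v, v⟫) (hST : S * T = T * S) (hSS : S * S = T * T) :
    ∀ v : E, 0 ≤ re ⟪(S + T) v, v⟫ := by
  set C : E →L[𝕜] E := S + T with hC
  have hCs : OpSym C := hSs.add hTs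
  have hSC : S * C = C * S := by rw [hC, mul_add, add_mul, hST]
  have hCsq : C * C = S * C + S * C := by
    have h1 : C * C = S * S + S * T + (T * S + T * T) := by rw [hC]; noncomm_ring
    rw [h1, ← hST, ← hSS, hC, mul_add]
    abel
  have hquad : C * (C * C) = S * C * S + S * C * S + (S * C * S + S * C * S) := by
    have e1 : S * C * S = S * S * C := by
      rw [mul_assoc, ← hSC, ← mul_assoc]
    have e2 : C * (S * C) = S * S * C + S * S * C := by
      rw [← mul_assoc, ← hSC, mul_assoc, hCsq, mul_add, ← mul_assoc]
    rw [hCsq, mul_add, e2, e1]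
  have hC3 : ∀ u : E, 0 ≤ re ⟪C (C (C u)), u⟫ := by
    intro u
    rw [hCs (C (C u)) u]
    have e : C (C u) = S (C u) + S (C u) := congrArg (fun (M : E →L[𝕜] E) => M u) hCsq
    rw [e]
    simp only [inner_add_left, map_add]
    linarith [hSp (C u)]
  have hranpos : ∀ u : E, 0 ≤ re ⟪C (S u), S u⟫ := by
    intro u
    have e1 : re ⟪C (S u), S u⟫ = re ⟪S (C (S u)), u⟫ :=
      (congrArg re (hSs (C (S u)) u)).symm
    have e3 : re ⟪C (C (C u)), u⟫ = 4 * re ⟪S (C (S u)), u⟫ := by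
      have e4 : C (C (C u)) = S (C (S u)) + S (C (S u)) + (S (C (S u)) + S (C (S u))) :=
        congrArg (fun (M : E →L[𝕜] E) => M u) hquad
      rw [e4]
      simp only [inner_add_left, map_add]
      ring
    have h4 := hC3 u
    rw [e3] at h4
    rw [e1]
    linarith
  have hker : ∀ k : E, S k = 0 → C k = 0 := by
    intro k hk
    have hTk : T k = 0 := by
      have e : ‖T k‖ ^ 2 = re ⟪(T * T) k, k⟫ := (re_inner_self_apply hTs k).symm
      rw [← hSS] at e
      have e2 : (S * S) k = 0 := by show S (S k) = 0; rw [hk, map_zero]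
      rw [e2, inner_zero_left, map_zero] at e
      exact norm_eq_zero.1 ((pow_eq_zero_iff (two_ne_zero)).1 e)
    show S k + T k = 0
    rw [hk, hTk, add_zero]
  -- density of ker S ⊔ range S
  set U : Submodule 𝕜 E := LinearMap.ker (S : E →ₗ[𝕜] E) ⊔ LinearMap.range (S : E →ₗ[𝕜] E) with hU
  have hUdense : Dense (U : Set E) := by
    rw [Submodule.dense_iff_topologicalClosure_eq_top,
      Submodule.topologicalClosure_eq_top_iff]
    rw [Submodule.eq_bot_iff]
    intro w hw
    rw [Submodule.mem_orthogonal] at hw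
    have hSw : S w = 0 := by
      have h1 : ∀ u : E, ⟪u, S w⟫ = 0 := by
        intro u
        rw [← hSs u w]
        exact hw (S u) (Submodule.mem_sup_right ⟨u, rfl⟩)
      have := h1 (S w)
      exact inner_self_eq_zero.1 this
    have := hw w (Submodule.mem_sup_left hSw)
    exact inner_self_eq_zero.1 this
  have hUpos : ∀ v ∈ (U : Set E), 0 ≤ re ⟪C v, v⟫ := by
    intro v hv
    rw [SetLike.mem_coe, hU, Submodule.mem_sup] at hv
    obtain ⟨k, hk, r, hr, rfl⟩ := hv
    obtain ⟨u, rfl⟩ := hr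
    rw [LinearMap.mem_ker] at hk
    have hCk : C k = 0 := hker k hk
    have e : ⟪C (k + S u), k + S u⟫
        = ⟪C k, k⟫ + ⟪C k, S u⟫ + (⟪C (S u), k⟫ + ⟪C (S u), S u⟫) := by
      rw [map_add]
      simp only [inner_add_left, inner_add_right]
      try ring
    change 0 ≤ re ⟪C (k + S u), k + S u⟫
    rw [e, hCk, inner_zero_left, inner_zero_left]
    have e2 : ⟪C (S u), k⟫ = 0 := by
      rw [hCs (S u) k, hCk, inner_zero_right]
    rw [e2]
    simp only [zero_add, map_add, map_zero]
    exact hranpos u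
  -- conclude by continuity
  intro v
  have hcont : Continuous (fun w : E => re ⟪C w, w⟫) :=
    RCLike.continuous_re.comp (Continuous.inner C.continuous continuous_id)
  have hclosed : IsClosed {w : E | 0 ≤ re ⟪C w, w⟫} :=
    isClosed_le continuous_const hcont
  have hsub : closure (U : Set E) ⊆ {w : E | 0 ≤ re ⟪C w, w⟫} :=
    closure_minimal hUpos hclosed
  have : v ∈ closure (U : Set E) := hUdense v
  exact hsub this

/-- existence of commuting positive/negative parts of a symmetric operator -/
lemma exists_posPart [CompleteSpace E] (X : E →L[𝕜] E) (hXs : OpSym X) :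
    ∃ Xp Xm : E →L[𝕜] E, OpSym Xp ∧ OpSym Xm ∧
      (∀ v : E, 0 ≤ re ⟪Xp v, v⟫) ∧ (∀ v : E, 0 ≤ re ⟪Xm v, v⟫) ∧
      Xp - Xm = X ∧ Xm * Xp = 0 ∧
      (∀ W : E →L[𝕜] E, W * X = X * W → W * Xp = Xp * W) := by
  rcases eq_or_ne X 0 with rfl | hX0
  · exact ⟨0, 0, fun x y => by simp, fun x y => by simp,
      fun v => by simp, fun v => by simp, by simp, by simp, fun W _ => by simp⟩
  have hN : (0:ℝ) < ‖X‖ := norm_pos_iff.2 hX0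
  set X' : E →L[𝕜] E := ((‖X‖⁻¹ : ℝ) : 𝕜) • X with hX'
  have hX's : OpSym X' := hXs.smul _
  have hX'contr : ∀ v : E, ‖X' v‖ ≤ ‖v‖ := by
    intro v
    have e : X' v = ((‖X‖⁻¹ : ℝ) : 𝕜) • X v := rfl
    rw [e, norm_smul]
    have : ‖(((‖X‖⁻¹ : ℝ)) : 𝕜)‖ = ‖X‖⁻¹ := by
      rw [RCLike.norm_ofReal, abs_of_pos (by positivity)]
    rw [this]
    calc ‖X‖⁻¹ * ‖X v‖ ≤ ‖X‖⁻¹ * (‖X‖ * ‖v‖) :=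
          mul_le_mul_of_nonneg_left (X.le_opNorm v) (by positivity)
    _ = ‖v‖ := by field_simp
  set Y : E →L[𝕜] E := X' * X' with hY
  have hYs : OpSym Y := hX's.mul hX's rfl
  have hYp : ∀ v : E, 0 ≤ re ⟪Y v, v⟫ := by
    intro v
    have e : re ⟪Y v, v⟫ = ‖X' v‖ ^ 2 := re_inner_self_apply hX's v
    rw [e]
    positivity
  have hY1 : ∀ v : E, re ⟪Y v, v⟫ ≤ ‖v‖ ^ 2 := by
    intro v
    have e : re ⟪Y v, v⟫ = ‖X' v‖ ^ 2 := re_inner_self_apply hX's v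
    rw [e]
    have := hX'contr v
    nlinarith [norm_nonneg (X' v), norm_nonneg v]
  obtain ⟨S, hSs, hSp, hSS, hScomm⟩ := exists_sqrt Y hYs hYp hY1
  have hSX' : S * X' = X' * S := by
    have := hScomm X' (by rw [hY, ← mul_assoc])
    exact this.symm
  have hX'X' : S * S = X' * X' := hSS
  -- positive part of X' is (S + X')/2, negative part (S - X')/2 = (S + (-X'))/2
  have hCpos : ∀ v : E, 0 ≤ re ⟪(S + X') v, v⟫ :=
    pospart_core hSs hX's hSp hSX' hX'X'
  have hDpos : ∀ v : E, 0 ≤ re ⟪(S + (-X')) v, v⟫ := by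
    apply pospart_core hSs (fun x y => by
      have e : (-X') x = -(X' x) := rfl
      have e2 : (-X') y = -(X' y) := rfl
      rw [e, e2, inner_neg_left, inner_neg_right, hX's x y])
      hSp
    · rw [mul_neg, neg_mul, hSX']
    · rw [neg_mul_neg, hX'X']
  set c : ℝ := ‖X‖ / 2 with hc
  have hc0 : 0 ≤ c := by positivity
  refine ⟨((c:ℝ) : 𝕜) • (S + X'), ((c:ℝ) : 𝕜) • (S - X'), (hSs.add hX's).smul _,
    (hSs.sub hX's).smul _, ?_, ?_, ?_, ?_, ?_⟩
  · intro v; rw [re_smul_apply]; exact mul_nonneg hc0 (hCpos v)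
  · intro v
    rw [re_smul_apply]
    apply mul_nonneg hc0
    have e : S - X' = S + (-X') := by abel
    rw [e]
    exact hDpos v
  · rw [← smul_sub]
    have e : S + X' - (S - X') = X' + X' := by abel
    rw [e, smul_add, ← add_smul, ← RCLike.ofReal_add, hc]
    have e2 : (‖X‖ / 2 + ‖X‖ / 2 : ℝ) = ‖X‖ := by ring
    rw [e2, hX', smul_smul, ← RCLike.ofReal_mul]
    rw [mul_inv_cancel₀ (ne_of_gt hN)]
    simp
  · rw [smul_mul_assoc, mul_smul_comm, smul_smul]
    have hDC : (S - X') * (S + X') = 0 := by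
      have e : (S - X') * (S + X') = S * S - X' * X' + (S * X' - X' * S) := by noncomm_ring
      rw [e, hX'X', hSX']
      simp
    rw [hDC, smul_zero]
  · intro W hW
    have hWX' : W * X' = X' * W := by
      rw [hX', mul_smul_comm, smul_mul_assoc, hW]
    have hWY : W * Y = Y * W := by
      rw [hY, ← mul_assoc, hWX', mul_assoc, hWX', ← mul_assoc]
    have hWS : W * S = S * W := hScomm W hWY
    rw [mul_smul_comm, smul_mul_assoc, mul_add, add_mul, hWS, hWX']


/-- the resolvent `B = (A + 1)⁻¹` of a positive self-adjoint operator -/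
lemma exists_resolvent [CompleteSpace E] (A : E →ₗ.[𝕜] E) (hA : IsSelfAdjointPMap A)
    (hpos : ∀ x : A.domain, 0 ≤ re ⟪A x, (x : E)⟫) :
    ∃ B : E →L[𝕜] E, OpSym B ∧
      (∀ y : E, ∃ h : B y ∈ A.domain, A ⟨B y, h⟩ = y - B y) ∧
      (∀ x : A.domain, B (A x + (x : E)) = (x : E)) ∧
      (∀ y : E, ‖B y‖ ^ 2 ≤ re ⟪B y, y⟫) := by
  classical
  obtain ⟨hdense, hherm, hmax⟩ := hA
  -- coercivity
  have hco : ∀ x : A.domain, ‖(x : E)‖ ≤ ‖A x + (x : E)‖ := by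
    intro x
    have h2 : re ⟪A x + (x : E), (x : E)⟫ = re ⟪A x, (x : E)⟫ + ‖(x : E)‖ ^ 2 := by
      rw [inner_add_left, map_add, @inner_self_eq_norm_sq 𝕜]
    have h3 : re ⟪A x + (x : E), (x : E)⟫ ≤ ‖A x + (x : E)‖ * ‖(x : E)‖ := by
      calc re ⟪A x + (x : E), (x : E)⟫ ≤ ‖(⟪A x + (x : E), (x : E)⟫ : 𝕜)‖ :=
            RCLike.re_le_norm _
      _ ≤ ‖A x + (x : E)‖ * ‖(x : E)‖ := norm_inner_le_norm _ _
    have h4 := hpos x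
    rcases eq_or_lt_of_le (norm_nonneg (x : E)) with h0 | h0
    · rw [← h0]; positivity
    · nlinarith
  set Lmap : A.domain →ₗ[𝕜] E := (A.toFun : A.domain →ₗ[𝕜] E) + A.domain.subtype with hL
  have hLapp : ∀ x : A.domain, Lmap x = A x + (x : E) := fun x => rfl
  set RS : Submodule 𝕜 E := LinearMap.range Lmap with hRS
  -- uniqueness
  have huniq : ∀ x x' : A.domain, A x + (x : E) = A x' + (x' : E) → x = x' := by
    intro x x' h
    have h1 : A (x - x') + ((x - x' : A.domain) : E) = 0 := by
      rw [A.map_sub]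
      push_cast
      rw [show A x - A x' + ((x : E) - (x' : E)) = A x + (x : E) - (A x' + (x' : E)) by abel,
        h]
      abel
    have h2 := hco (x - x')
    rw [h1, norm_zero] at h2
    have h3 : ((x - x' : A.domain) : E) = 0 :=
      norm_eq_zero.1 (le_antisymm h2 (norm_nonneg _))
    have h4 : (x : E) - (x' : E) = 0 := by push_cast at h3; exact h3
    exact Subtype.ext (sub_eq_zero.1 h4)
  -- the range is sequentially closed
  have hclosed : IsClosed (RS : Set E) := by
    apply IsSeqClosed.isClosed
    intro xs p hmem hconv
    have hun : ∀ n, ∃ x : A.domain, Lmap x = xs n := by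
      intro n
      have := hmem n
      rwa [SetLike.mem_coe, hRS, LinearMap.mem_range] at this
    choose un hun using hun
    have hdiff : ∀ m n : ℕ, ‖(un m : E) - (un n : E)‖ ≤ ‖xs m - xs n‖ := by
      intro m n
      have h1 := hco (un m - un n)
      have e1 : A (un m - un n) + ((un m - un n : A.domain) : E) = xs m - xs n := by
        rw [A.map_sub]
        push_cast
        rw [show A (un m) - A (un n) + ((un m : E) - (un n : E))
            = A (un m) + (un m : E) - (A (un n) + (un n : E)) by abel]
        rw [← hLapp, ← hLapp, hun m, hun n]
      rw [e1] at h1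
      calc ‖(un m : E) - (un n : E)‖ = ‖((un m - un n : A.domain) : E)‖ := by
            push_cast; rfl
      _ ≤ ‖xs m - xs n‖ := h1
    have hCu : CauchySeq (fun n => (un n : E)) := by
      rw [Metric.cauchySeq_iff]
      intro ε hε
      have hcx := hconv.cauchySeq
      rw [Metric.cauchySeq_iff] at hcx
      obtain ⟨N, hN⟩ := hcx ε hε
      refine ⟨N, fun m hm n hn => ?_⟩
      have := hN m hm n hn
      rw [dist_eq_norm] at this ⊢
      exact lt_of_le_of_lt (hdiff m n) this
    obtain ⟨u, hu⟩ := cauchySeq_tendsto_of_complete hCu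
    have hAlim : Tendsto (fun n => A (un n)) atTop (𝓝 (p - u)) := by
      have e : (fun n => A (un n)) = fun n => xs n - (un n : E) := by
        funext n
        have h := hun n
        rw [hLapp] at h
        exact eq_sub_of_add_eq h
      rw [e]
      exact hconv.sub hu
    have hkey : ∀ v : A.domain, ⟪A v, u⟫ = ⟪(v : E), p - u⟫ := by
      intro v
      have l1 : Tendsto (fun n => (⟪A v, (un n : E)⟫ : 𝕜)) atTop (𝓝 ⟪A v, u⟫) :=
        tendsto_const_nhds.inner hu
      have l2 : Tendsto (fun n => (⟪A v, (un n : E)⟫ : 𝕜)) atTop (𝓝 ⟪(v : E), p - u⟫) := by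
        have e2 : (fun n => (⟪A v, (un n : E)⟫ : 𝕜)) = fun n => (⟪(v : E), A (un n)⟫ : 𝕜) :=
          funext fun n => hherm v (un n)
        rw [e2]
        exact tendsto_const_nhds.inner hAlim
      exact tendsto_nhds_unique l1 l2
    obtain ⟨hu', hAu'⟩ := hmax u (p - u) hkey
    rw [SetLike.mem_coe, hRS, LinearMap.mem_range]
    refine ⟨⟨u, hu'⟩, ?_⟩
    rw [hLapp, hAu']
    abel
  -- the range is dense
  have hdense2 : Dense (RS : Set E) := by
    rw [Submodule.dense_iff_topologicalClosure_eq_top,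
      Submodule.topologicalClosure_eq_top_iff, Submodule.eq_bot_iff]
    intro w hw
    rw [Submodule.mem_orthogonal] at hw
    have hkey : ∀ v : A.domain, ⟪A v, w⟫ = ⟪(v : E), -w⟫ := by
      intro v
      have h1 : (⟪A v + (v : E), w⟫ : 𝕜) = 0 := by
        have := hw (Lmap v) ⟨v, rfl⟩
        rwa [hLapp] at this
      rw [inner_add_left] at h1
      rw [inner_neg_right]
      exact eq_neg_of_add_eq_zero_left h1
    obtain ⟨hw', hAw⟩ := hmax w (-w) hkey
    have hp := hpos ⟨w, hw'⟩
    rw [hAw, inner_neg_left, map_neg] at hp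
    rw [@inner_self_eq_norm_sq 𝕜] at hp
    have h0 : ‖w‖ = 0 := by nlinarith [norm_nonneg w, sq_nonneg ‖w‖]
    exact norm_eq_zero.1 h0
  -- surjectivity
  have hall : ∀ y : E, ∃ x : A.domain, A x + (x : E) = y := by
    intro y
    have h1 : (RS : Set E) = Set.univ := by
      have h2 := hdense2.closure_eq
      rw [hclosed.closure_eq] at h2
      exact h2
    have h2 : y ∈ (RS : Set E) := by rw [h1]; trivial
    rw [SetLike.mem_coe, hRS, LinearMap.mem_range] at h2
    obtain ⟨x, hx⟩ := h2
    exact ⟨x, by rw [← hLapp]; exact hx⟩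
  choose bf hbf using hall
  have hadd : ∀ y y' : E, bf (y + y') = bf y + bf y' := by
    intro y y'
    apply huniq
    rw [hbf (y + y'), A.map_add]
    push_cast
    rw [show A (bf y) + A (bf y') + ((bf y : E) + (bf y' : E))
        = A (bf y) + (bf y : E) + (A (bf y') + (bf y' : E)) by abel,
      hbf y, hbf y']
  have hsmul : ∀ (a : 𝕜) (y : E), bf (a • y) = a • bf y := by
    intro a y
    apply huniq
    rw [hbf (a • y), A.map_smul]
    push_cast
    rw [← smul_add, hbf y]
  have hbd : ∀ y : E, ‖(bf y : E)‖ ≤ 1 * ‖y‖ := by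
    intro y
    rw [one_mul]
    have := hco (bf y)
    rwa [hbf y] at this
  set B : E →L[𝕜] E := LinearMap.mkContinuous
    { toFun := fun y => ((bf y : E))
      map_add' := fun y y' => by rw [hadd]; push_cast; rfl
      map_smul' := fun a y => by rw [hsmul]; push_cast; rfl } 1 hbd with hB
  have hBapp : ∀ y : E, B y = (bf y : E) := fun y => rfl
  have hsym : OpSym B := by
    intro y z
    rw [hBapp, hBapp]
    calc (⟪(bf y : E), z⟫ : 𝕜) = ⟪(bf y : E), A (bf z) + (bf z : E)⟫ := by rw [hbf z]
    _ = ⟪(bf y : E), A (bf z)⟫ + ⟪(bf y : E), (bf z : E)⟫ := inner_add_right _ _ _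
    _ = ⟪A (bf y), (bf z : E)⟫ + ⟪(bf y : E), (bf z : E)⟫ := by rw [hherm (bf y) (bf z)]
    _ = ⟪A (bf y) + (bf y : E), (bf z : E)⟫ := (inner_add_left _ _ _).symm
    _ = ⟪y, (bf z : E)⟫ := by rw [hbf y]
  refine ⟨B, hsym, ?_, ?_, ?_⟩
  · intro y
    refine ⟨(bf y).2, ?_⟩
    have e : (⟨B y, (bf y).2⟩ : A.domain) = bf y := Subtype.ext (hBapp y)
    rw [e, hBapp]
    exact eq_sub_of_add_eq (hbf y)
  · intro x
    rw [hBapp]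
    have := huniq (bf (A x + (x : E))) x (by rw [hbf])
    rw [this]
  · intro y
    rw [hBapp]
    have e2 : (⟪(bf y : E), y⟫ : 𝕜) = ⟪(bf y : E), A (bf y) + (bf y : E)⟫ :=
      congrArg (fun t => (⟪(bf y : E), t⟫ : 𝕜)) (hbf y).symm
    have e : re ⟪(bf y : E), y⟫ = re ⟪(bf y : E), A (bf y)⟫ + ‖(bf y : E)‖ ^ 2 := by
      rw [e2, inner_add_right, map_add, @inner_self_eq_norm_sq 𝕜]
    rw [e]
    have h1 : re ⟪(bf y : E), A (bf y)⟫ = re ⟪A (bf y), (bf y : E)⟫ := by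
      rw [← inner_conj_symm]
      exact RCLike.conj_re _
    rw [h1]
    linarith [hpos (bf y)]


set_option maxHeartbeats 2000000 in
/-- Vectors in the closure of the range of the positive part of `B - ε` are `A`-bounded,
and they approximate every vector: density of bounded vectors. -/
lemma dense_bounded_vectors [CompleteSpace E] (A : E →ₗ.[𝕜] E) (hA : IsSelfAdjointPMap A)
    (hpos : ∀ x : A.domain, 0 ≤ re ⟪A x, (x : E)⟫) (x : E) {η : ℝ} (hη : 0 < η) :
    ∃ (lam : ℝ) (v : E), v ∈ Fset A lam ∧ ‖x - v‖ < η := by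
  classical
  obtain ⟨B, hBs, hBdom, hBran, hBpos2⟩ := exists_resolvent A hA hpos
  -- pick d in the domain close to x
  have hx : x ∈ closure (A.domain : Set E) := hA.1 x
  rw [Metric.mem_closure_iff] at hx
  obtain ⟨d, hd, hdist⟩ := hx (η / 2) (by positivity)
  rw [dist_eq_norm] at hdist
  set dd : A.domain := ⟨d, hd⟩ with hdd
  set u' : E := A dd + d with hu'
  have hBu' : B u' = d := hBran dd
  -- choose ε
  set ε : ℝ := min 1 ((η / (2 * (‖u'‖ + 1))) ^ 2) with hε
  have hε0 : 0 < ε := by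
    apply lt_min one_pos
    positivity
  have hsqrt : Real.sqrt ε * ‖u'‖ < η / 2 := by
    have h1 : Real.sqrt ε ≤ η / (2 * (‖u'‖ + 1)) := by
      calc Real.sqrt ε ≤ Real.sqrt ((η / (2 * (‖u'‖ + 1))) ^ 2) :=
            Real.sqrt_le_sqrt (min_le_right _ _)
      _ = η / (2 * (‖u'‖ + 1)) := Real.sqrt_sq (by positivity)
    have h2 : (0:ℝ) ≤ Real.sqrt ε := Real.sqrt_nonneg _
    have h3 : ‖u'‖ < ‖u'‖ + 1 := by linarith
    have h4 : Real.sqrt ε * ‖u'‖ ≤ (η / (2 * (‖u'‖ + 1))) * ‖u'‖ :=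
      mul_le_mul_of_nonneg_right h1 (norm_nonneg _)
    have h5 : (η / (2 * (‖u'‖ + 1))) * ‖u'‖ < η / 2 := by
      rw [div_mul_eq_mul_div, div_lt_div_iff₀ (by positivity) (by norm_num)]
      nlinarith [norm_nonneg u']
    linarith
  -- the positive part of X = B - ε
  set X : E →L[𝕜] E := B - ((ε : ℝ) : 𝕜) • (1 : E →L[𝕜] E) with hX
  have hXs : OpSym X := hBs.sub (OpSym.one.smul ε)
  obtain ⟨Xp, Xm, hXps, hXms, hXpp, hXmp, hXpmX, hXmXp, hXpcomm⟩ := exists_posPart X hXs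
  have hBX : B * X = X * B := by
    rw [hX, mul_sub, sub_mul, mul_smul_comm, smul_mul_assoc, mul_one, one_mul]
  have hBXp : B * Xp = Xp * B := hXpcomm B hBX
  have hXre : ∀ v : E, re ⟪X v, v⟫ = re ⟪B v, v⟫ - ε * ‖v‖ ^ 2 := by
    intro v
    rw [hX, re_sub_apply, re_smul_apply, re_one_apply]
  -- the subspace V
  set V : Submodule 𝕜 E := (LinearMap.range (Xp : E →ₗ[𝕜] E)).topologicalClosure with hV
  have hVclosed : IsClosed (V : Set E) := Submodule.isClosed_topologicalClosure _
  have hVcoe : (V : Set E) = closure ((LinearMap.range (Xp : E →ₗ[𝕜] E) : Submodule 𝕜 E) : Set E) := rfl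
  -- B maps V to V
  have hBV : ∀ v ∈ V, B v ∈ V := by
    intro v hv
    have h1 : v ∈ closure ((LinearMap.range (Xp : E →ₗ[𝕜] E) : Submodule 𝕜 E) : Set E) := hv
    have h2 : B v ∈ closure (B '' ((LinearMap.range (Xp : E →ₗ[𝕜] E) : Submodule 𝕜 E) : Set E)) :=
      image_closure_subset_closure_image B.continuous ⟨v, h1, rfl⟩
    have h3 : B '' ((LinearMap.range (Xp : E →ₗ[𝕜] E) : Submodule 𝕜 E) : Set E)
        ⊆ ((LinearMap.range (Xp : E →ₗ[𝕜] E) : Submodule 𝕜 E) : Set E) := by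
      rintro _ ⟨_, ⟨w, rfl⟩, rfl⟩
      exact ⟨B w, (congrArg (fun (T : E →L[𝕜] E) => T w) hBXp).symm⟩
    exact closure_mono h3 h2
  -- lower bound on V
  have hVlow : ∀ v ∈ V, ε * ‖v‖ ^ 2 ≤ re ⟪B v, v⟫ := by
    intro v hv
    have hXXp : X * Xp = Xp * Xp := by
      rw [← hXpmX, sub_mul, hXmXp, sub_zero]
    have hpos_on_range : ∀ w ∈ ((LinearMap.range (Xp : E →ₗ[𝕜] E) : Submodule 𝕜 E) : Set E),
        0 ≤ re ⟪X w, w⟫ := by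
      rintro _ ⟨z, rfl⟩
      have e : X ((Xp : E →ₗ[𝕜] E) z) = Xp (Xp z) :=
        congrArg (fun (T : E →L[𝕜] E) => T z) hXXp
      show 0 ≤ re ⟪X (Xp z), Xp z⟫
      rw [show X (Xp z) = Xp (Xp z) from e]
      exact hXpp (Xp z)
    have hcont : Continuous (fun w : E => re ⟪X w, w⟫) :=
      RCLike.continuous_re.comp (Continuous.inner X.continuous continuous_id)
    have hclosed2 : IsClosed {w : E | 0 ≤ re ⟪X w, w⟫} := isClosed_le continuous_const hcont
    have h4 : 0 ≤ re ⟪X v, v⟫ := closure_minimal hpos_on_range hclosed2 hv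
    rw [hXre v] at h4
    linarith
  have hlowpt : ∀ v ∈ V, ε * ‖v‖ ≤ ‖B v‖ := by
    intro v hv
    have h1 := hVlow v hv
    have h2 : re ⟪B v, v⟫ ≤ ‖B v‖ * ‖v‖ := by
      calc re ⟪B v, v⟫ ≤ ‖(⟪B v, v⟫ : 𝕜)‖ := RCLike.re_le_norm _
      _ ≤ ‖B v‖ * ‖v‖ := norm_inner_le_norm _ _
    rcases eq_or_lt_of_le (norm_nonneg v) with h0 | h0
    · rw [← h0, mul_zero]; exact norm_nonneg _
    · have h3 : ε * ‖v‖ * ‖v‖ ≤ ‖B v‖ * ‖v‖ := by nlinarith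
      exact le_of_mul_le_mul_right h3 h0
  -- B is onto on V
  haveI : CompleteSpace V := hVclosed.completeSpace_coe
  set WS : Submodule 𝕜 E := Submodule.map (B : E →ₗ[𝕜] E) V with hWS
  have hWSV : WS ≤ V := by
    rintro _ ⟨w, hw, rfl⟩
    exact hBV w hw
  have hWclosed : IsClosed (WS : Set E) := by
    apply IsSeqClosed.isClosed
    intro ys p hmem hconv
    have h1 : ∀ n, ∃ v ∈ V, B v = ys n := by
      intro n
      have := hmem n
      rw [SetLike.mem_coe, hWS, Submodule.mem_map] at this
      obtain ⟨v, hv, he⟩ := this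
      exact ⟨v, hv, he⟩
    choose vs hvs hBvs using h1
    have hCv : CauchySeq vs := by
      rw [Metric.cauchySeq_iff]
      intro δ hδ
      have hcy := hconv.cauchySeq
      rw [Metric.cauchySeq_iff] at hcy
      obtain ⟨N, hN⟩ := hcy (ε * δ) (by positivity)
      refine ⟨N, fun m hm n hn => ?_⟩
      have h2 := hN m hm n hn
      rw [dist_eq_norm] at h2 ⊢
      have h3 : ε * ‖vs m - vs n‖ ≤ ‖B (vs m) - B (vs n)‖ := by
        have h4 := hlowpt (vs m - vs n) (V.sub_mem (hvs m) (hvs n))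
        rwa [map_sub] at h4
      rw [hBvs m, hBvs n] at h3
      have h5 : ε * ‖vs m - vs n‖ < ε * δ := lt_of_le_of_lt h3 h2
      exact lt_of_mul_lt_mul_left h5 (le_of_lt hε0) |>.trans_le le_rfl
    obtain ⟨v, hv⟩ := cauchySeq_tendsto_of_complete hCv
    have hvV : v ∈ V := hVclosed.mem_of_tendsto hv (Filter.Eventually.of_forall
      (fun n => hvs n))
    have hBv : B v = p := by
      have l1 : Tendsto (fun n => B (vs n)) atTop (𝓝 (B v)) :=
        (B.continuous.tendsto _).comp hv
      have l2 : Tendsto (fun n => B (vs n)) atTop (𝓝 p) := by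
        have e : (fun n => B (vs n)) = ys := funext hBvs
        rw [e]; exact hconv
      exact tendsto_nhds_unique l1 l2
    rw [SetLike.mem_coe, hWS, Submodule.mem_map]
    exact ⟨v, hvV, hBv⟩
  haveI : CompleteSpace WS := hWclosed.completeSpace_coe
  have hsurj : ∀ v ∈ V, ∃ u ∈ V, B u = v := by
    intro v hv
    have hvW : v ∈ WS := by
      set w : E := v - (WS.orthogonalProjectionOnto v : E) with hw
      have hworth : w ∈ WSᗮ := Submodule.sub_starProjection_mem_orthogonal (K := WS) v
      have hwV : w ∈ V := V.sub_mem hv (hWSV (WS.orthogonalProjectionOnto v).2)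
      have hBwW : B w ∈ WS := ⟨w, hwV, rfl⟩
      have h0 : (⟪B w, w⟫ : 𝕜) = 0 := by
        rw [Submodule.mem_orthogonal] at hworth
        exact hworth (B w) hBwW
      have h1 := hVlow w hwV
      rw [h0, map_zero] at h1
      have h2 : ‖w‖ ^ 2 = 0 := le_antisymm (by nlinarith [hε0]) (sq_nonneg _)
      have h3 : w = 0 := norm_eq_zero.1 ((pow_eq_zero_iff two_ne_zero).1 h2)
      have h4 : v = (WS.orthogonalProjectionOnto v : E) := by
        have := sub_eq_zero.1 h3
        exact this
      rw [h4]
      exact (WS.orthogonalProjectionOnto v).2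
    rw [hWS, Submodule.mem_map] at hvW
    obtain ⟨u, hu, hBu⟩ := hvW
    exact ⟨u, hu, hBu⟩
  -- every vector of V is A-bounded
  have hstep : ∀ v ∈ V, ∃ h : v ∈ A.domain,
      (A ⟨v, h⟩ ∈ V ∧ ‖A ⟨v, h⟩‖ ≤ (1 + 1 / ε) * ‖v‖) := by
    intro v hv
    obtain ⟨u, hu, hBu⟩ := hsurj v hv
    obtain ⟨hdom, hAeq⟩ := hBdom u
    have hdom' : v ∈ A.domain := by rw [← hBu]; exact hdom
    have e2 : (⟨B u, hdom⟩ : A.domain) = ⟨v, hdom'⟩ := Subtype.ext hBu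
    have e : A ⟨v, hdom'⟩ = u - v := by rw [← e2, hAeq, hBu]
    refine ⟨hdom', ?_, ?_⟩
    · rw [e]
      exact V.sub_mem hu hv
    · rw [e]
      have h1 : ‖u‖ ≤ (1 / ε) * ‖v‖ := by
        have h2 := hlowpt u hu
        rw [hBu] at h2
        rw [div_mul_eq_mul_div, le_div_iff₀ hε0]
        linarith
      calc ‖u - v‖ ≤ ‖u‖ + ‖v‖ := norm_sub_le _ _
      _ ≤ (1 / ε) * ‖v‖ + ‖v‖ := add_le_add h1 le_rfl
      _ = (1 + 1 / ε) * ‖v‖ := by ring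
  have hFsetV : ∀ v ∈ V, v ∈ Fset A (1 + 1 / ε) := by
    intro v hv n
    have hlam : (0:ℝ) ≤ 1 + 1 / ε := by positivity
    have key : ∀ m : ℕ, ∃ y : E, PowRel A m v y ∧ y ∈ V ∧ ‖y‖ ≤ (1 + 1 / ε) ^ m * ‖v‖ := by
      intro m
      induction m with
      | zero => exact ⟨v, PowRel.zero v, hv, by simp⟩
      | succ m ih =>
        obtain ⟨y, hy, hyV, hyn⟩ := ih
        obtain ⟨hdom, hAV, hAn⟩ := hstep y hyV
        refine ⟨A ⟨y, hdom⟩, PowRel.succ hy hdom, hAV, ?_⟩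
        calc ‖A ⟨y, hdom⟩‖ ≤ (1 + 1 / ε) * ‖y‖ := hAn
        _ ≤ (1 + 1 / ε) * ((1 + 1 / ε) ^ m * ‖v‖) := by
            exact mul_le_mul_of_nonneg_left hyn hlam
        _ = (1 + 1 / ε) ^ (m + 1) * ‖v‖ := by ring
    obtain ⟨y, hy, _, hyn⟩ := key n
    exact ⟨y, hy, hyn⟩
  -- approximate d by its projection to V
  set v : E := (V.orthogonalProjectionOnto d : E) with hvdef
  set w : E := d - v with hwdef
  have hworth : w ∈ Vᗮ := Submodule.sub_starProjection_mem_orthogonal (K := V) d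
  have hXpw : Xp w = 0 := by
    have h1 : ∀ z : E, (⟪z, Xp w⟫ : 𝕜) = 0 := by
      intro z
      rw [← hXps z w]
      rw [Submodule.mem_orthogonal] at hworth
      apply hworth
      exact Submodule.le_topologicalClosure _ ⟨z, rfl⟩
    exact inner_self_eq_zero.1 (h1 (Xp w))
  have hBw_small : re ⟪B w, w⟫ ≤ ε * ‖w‖ ^ 2 := by
    have h1 : X w = -(Xm w) := by
      have e : X w = Xp w - Xm w := by
        rw [← hXpmX]; rfl
      rw [e, hXpw, zero_sub]
    have h2 : re ⟪X w, w⟫ ≤ 0 := by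
      rw [h1, inner_neg_left, map_neg]
      linarith [hXmp w]
    rw [hXre w] at h2
    linarith
  have hBw2 : ‖B w‖ ≤ Real.sqrt ε * ‖w‖ := by
    have h1 : ‖B w‖ ^ 2 ≤ ε * ‖w‖ ^ 2 := le_trans (hBpos2 w) hBw_small
    have h2 : Real.sqrt (‖B w‖ ^ 2) ≤ Real.sqrt (ε * ‖w‖ ^ 2) := Real.sqrt_le_sqrt h1
    rwa [Real.sqrt_sq (norm_nonneg _), Real.sqrt_mul (le_of_lt hε0),
      Real.sqrt_sq (norm_nonneg _)] at h2
  have hwnorm : ‖w‖ ≤ Real.sqrt ε * ‖u'‖ := by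
    have h1 : re ⟪w, d⟫ = ‖w‖ ^ 2 := by
      have e : (⟪w, d⟫ : 𝕜) = ⟪w, w⟫ + ⟪w, v⟫ := by
        rw [← inner_add_right]
        congr 1
        rw [hwdef]
        abel
      have e2 : (⟪w, v⟫ : 𝕜) = 0 := by
        rw [Submodule.mem_orthogonal] at hworth
        have h3 := hworth v (V.orthogonalProjectionOnto d).2
        rw [← inner_conj_symm, h3, map_zero]
      rw [e, e2, add_zero, @inner_self_eq_norm_sq 𝕜]
    have h2 : re ⟪w, d⟫ ≤ Real.sqrt ε * ‖u'‖ * ‖w‖ := by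
      rw [← hBu']
      have e : (⟪w, B u'⟫ : 𝕜) = ⟪B w, u'⟫ := (hBs w u').symm
      rw [e]
      calc re ⟪B w, u'⟫ ≤ ‖(⟪B w, u'⟫ : 𝕜)‖ := RCLike.re_le_norm _
      _ ≤ ‖B w‖ * ‖u'‖ := norm_inner_le_norm _ _
      _ ≤ (Real.sqrt ε * ‖w‖) * ‖u'‖ := mul_le_mul_of_nonneg_right hBw2 (norm_nonneg _)
      _ = Real.sqrt ε * ‖u'‖ * ‖w‖ := by ring
    rcases eq_or_lt_of_le (norm_nonneg w) with h0 | h0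
    · rw [← h0]; positivity
    · rw [h1] at h2
      have h3 : ‖w‖ * ‖w‖ ≤ (Real.sqrt ε * ‖u'‖) * ‖w‖ := by nlinarith
      exact le_of_mul_le_mul_right h3 h0
  refine ⟨1 + 1 / ε, v, hFsetV v (V.orthogonalProjectionOnto d).2, ?_⟩
  calc ‖x - v‖ ≤ ‖x - d‖ + ‖d - v‖ := norm_sub_le_norm_sub_add_norm_sub _ _ _
  _ < η / 2 + η / 2 := by
      apply add_lt_add_of_lt_of_le hdist
      calc ‖d - v‖ = ‖w‖ := rfl
      _ ≤ Real.sqrt ε * ‖u'‖ := hwnorm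
      _ ≤ η / 2 := le_of_lt hsqrt
  _ = η := by ring


lemma powRel_unique {A : E →ₗ.[𝕜] E} {n : ℕ} {x y y' : E}
    (h1 : PowRel A n x y) (h2 : PowRel A n x y') : y = y' := by
  induction n generalizing y y' with
  | zero => cases h1; cases h2; rfl
  | succ n ih =>
    cases h1 with
    | succ h1' hy1 =>
      cases h2 with
      | succ h2' hy2 =>
        rename_i w1 w2
        have e : w1 = w2 := ih h1' h2'
        subst e
        rfl

lemma powRel_zero_zero (A : E →ₗ.[𝕜] E) (n : ℕ) : PowRel A n 0 0 := by
  induction n with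
  | zero => exact .zero 0
  | succ n ih =>
    have h := PowRel.succ ih A.domain.zero_mem
    have e : A ⟨(0 : E), A.domain.zero_mem⟩ = 0 := by
      have e2 : (⟨(0 : E), A.domain.zero_mem⟩ : A.domain) = 0 := rfl
      rw [e2, A.map_zero]
    rwa [e] at h

lemma zero_mem_Fset (A : E →ₗ.[𝕜] E) (t : ℝ) : (0 : E) ∈ Fset A t := by
  intro n
  exact ⟨0, powRel_zero_zero A n, by simp⟩

lemma Fset_mono (A : E →ₗ.[𝕜] E) {st t : ℝ} (hst : st ≤ t) : Fset A st ⊆ Fset A t := by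
  intro x hx
  rcases le_or_gt 0 st with h0 | h0
  · intro n
    obtain ⟨y, hy, hb⟩ := hx n
    refine ⟨y, hy, le_trans hb ?_⟩
    exact mul_le_mul_of_nonneg_right (pow_le_pow_left₀ h0 hst n) (norm_nonneg x)
  · have hx0 : x = 0 := by
      obtain ⟨y, hy1, hb1⟩ := hx 1
      rw [pow_one] at hb1
      have h1 : (0:ℝ) ≤ ‖y‖ := norm_nonneg y
      have h2 : 0 ≤ st * ‖x‖ := le_trans h1 hb1
      rcases eq_or_lt_of_le (norm_nonneg x) with h3 | h3
      · exact norm_eq_zero.1 h3.symm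
      · nlinarith
    rw [hx0]
    exact zero_mem_Fset A t

end AuxOps

theorem stmt17 [CompleteSpace E] (A : E →ₗ.[𝕜] E) (hA : IsSelfAdjointPMap A)
    (hpos : ∀ x : A.domain, 0 ≤ re ⟪A x, (x : E)⟫)
    (P : ℝ → (E →L[𝕜] E))
    (hPidem : ∀ t, IsIdempotentElem (P t))
    (hPsa : ∀ (t : ℝ) (x y : E), ⟪P t x, y⟫ = ⟪x, P t y⟫)
    (hPmem : ∀ (t : ℝ) (x : E), P t x ∈ Fset A t)
    (hPfix : ∀ t : ℝ, ∀ x ∈ Fset A t, P t x = x) :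
    IsSpectralFamily P := by
  classical
  -- basic consequences
  have hidem : ∀ (t : ℝ) (x : E), P t (P t x) = P t x :=
    fun t x => congrArg (fun (T : E →L[𝕜] E) => T x) (hPidem t)
  have hmono : ∀ s t : ℝ, s ≤ t → ∀ x, P t (P s x) = P s x :=
    fun s t hst x => hPfix t _ (Fset_mono A hst (hPmem s x))
  have hPtP : ∀ s t : ℝ, s ≤ t → ∀ x, P s (P t x) = P s x := by
    intro s t hst x
    apply ext_inner_right 𝕜
    intro v
    calc ⟪P s (P t x), v⟫ = ⟪P t x, P s v⟫ := hPsa s _ v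
    _ = ⟪x, P t (P s v)⟫ := hPsa t x _
    _ = ⟪x, P s v⟫ := by rw [hmono s t hst v]
    _ = ⟪P s x, v⟫ := (hPsa s x v).symm
  have hre : ∀ (t : ℝ) (x : E), ‖P t x‖ ^ 2 = re ⟪x, P t x⟫ := by
    intro t x
    rw [← @inner_self_eq_norm_sq 𝕜, hPsa t x (P t x), hidem t x]
  have hdiff : ∀ s t : ℝ, s ≤ t → ∀ x : E,
      ‖P t x - P s x‖ ^ 2 = ‖P t x‖ ^ 2 - ‖P s x‖ ^ 2 := by
    intro s t hst x
    have h1 : re ⟪P t x, P s x⟫ = ‖P s x‖ ^ 2 := by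
      rw [hPsa t x (P s x), hmono s t hst x, hre s x]
    rw [@norm_sub_sq 𝕜, h1]
    ring
  have hgm : ∀ s t : ℝ, s ≤ t → ∀ x : E, ‖P s x‖ ^ 2 ≤ ‖P t x‖ ^ 2 := by
    intro s t hst x
    have h1 := hdiff s t hst x
    nlinarith [sq_nonneg ‖P t x - P s x‖]
  have hcontr : ∀ (t : ℝ) (x : E), ‖P t x‖ ≤ ‖x‖ := by
    intro t x
    have h1 := hre t x
    have h2 : re ⟪x, P t x⟫ ≤ ‖x‖ * ‖P t x‖ := by
      calc re ⟪x, P t x⟫ ≤ ‖(⟪x, P t x⟫ : 𝕜)‖ := RCLike.re_le_norm _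
      _ ≤ ‖x‖ * ‖P t x‖ := norm_inner_le_norm _ _
    rcases eq_or_lt_of_le (norm_nonneg (P t x)) with h0 | h0
    · rw [← h0]; exact norm_nonneg x
    · nlinarith
  refine ⟨hPidem, hPsa, hmono, ?_, ?_, ?_⟩
  -- right continuity
  · intro t x
    set sq : ℕ → ℝ := fun n => t + 1 / (n + 1) with hsq
    have hsgt : ∀ n : ℕ, t < sq n := by
      intro n
      have h1 : (0:ℝ) < 1 / ((n:ℝ) + 1) := by positivity
      simp only [hsq]
      linarith
    have hsanti : ∀ m n : ℕ, m ≤ n → sq n ≤ sq m := by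
      intro m n hmn
      have h1 : ((m:ℝ) + 1) ≤ ((n:ℝ) + 1) := by
        have : (m:ℝ) ≤ (n:ℝ) := by exact_mod_cast hmn
        linarith
      have h2 : 1 / ((n:ℝ) + 1) ≤ 1 / ((m:ℝ) + 1) :=
        one_div_le_one_div_of_le (by positivity) h1
      simp only [hsq]
      linarith
    set a : ℕ → ℝ := fun n => ‖P (sq n) x‖ ^ 2 with ha
    have hamono : Antitone a := fun m n hmn => hgm _ _ (hsanti m n hmn) x
    have hbdd : BddBelow (Set.range a) := ⟨0, by rintro _ ⟨n, rfl⟩; positivity⟩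
    set L : ℝ := ⨅ n, a n with hL
    have haL : Tendsto a atTop (𝓝 L) := tendsto_atTop_ciInf hamono hbdd
    have hLle : ∀ n, L ≤ a n := fun n => ciInf_le hbdd n
    have hLlow : ∀ u : ℝ, t < u → L ≤ ‖P u x‖ ^ 2 := by
      intro u hu
      obtain ⟨k, hk⟩ := exists_nat_one_div_lt (show (0:ℝ) < u - t by linarith)
      have h1 : sq k ≤ u := by
        simp only [hsq]
        linarith
      exact le_trans (hLle k) (hgm _ _ h1 x)
    have hcauchy : CauchySeq (fun n => P (sq n) x) := by
      rw [Metric.cauchySeq_iff']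
      intro ε hε
      have hacauchy := haL.cauchySeq
      rw [Metric.cauchySeq_iff'] at hacauchy
      obtain ⟨N, hN⟩ := hacauchy (ε ^ 2) (by positivity)
      refine ⟨N, fun n hn => ?_⟩
      have h1 := hN n hn
      rw [Real.dist_eq, abs_lt] at h1
      have h2 : ‖P (sq N) x - P (sq n) x‖ ^ 2 = a N - a n := hdiff _ _ (hsanti N n hn) x
      have h3 : ‖P (sq N) x - P (sq n) x‖ ^ 2 < ε ^ 2 := by rw [h2]; linarith [h1.2]
      rw [dist_eq_norm, norm_sub_rev]
      nlinarith [norm_nonneg (P (sq N) x - P (sq n) x), hε]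
    obtain ⟨z, hz⟩ := cauchySeq_tendsto_of_complete hcauchy
    have hPsz : ∀ u : ℝ, t < u → P u z = z := by
      intro u hu
      have h1 : Tendsto (fun n => P u (P (sq n) x)) atTop (𝓝 (P u z)) :=
        ((P u).continuous.tendsto _).comp hz
      have h2 : Tendsto (fun n => P u (P (sq n) x)) atTop (𝓝 z) := by
        apply hz.congr'
        obtain ⟨k, hk⟩ := exists_nat_one_div_lt (show (0:ℝ) < u - t by linarith)
        filter_upwards [Filter.eventually_ge_atTop k] with n hn
        have h3 : sq n ≤ u := by
          have h4 := hsanti k n hn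
          have h5 : sq k ≤ u := by simp only [hsq]; linarith
          linarith
        exact (hmono (sq n) u h3 x).symm
      exact tendsto_nhds_unique h1 h2
    have hzFs : ∀ u : ℝ, t < u → z ∈ Fset A u := by
      intro u hu
      have h1 := hPmem u z
      rwa [hPsz u hu] at h1
    have hzFt : z ∈ Fset A t := by
      intro n
      obtain ⟨y, hy, _⟩ := hzFs (sq 0) (hsgt 0) n
      refine ⟨y, hy, ?_⟩
      have hk : ∀ k : ℕ, ‖y‖ ≤ (sq k) ^ n * ‖z‖ := by
        intro k
        obtain ⟨y', hy', hb'⟩ := hzFs (sq k) (hsgt k) n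
        have e : y' = y := powRel_unique hy' hy
        rw [e] at hb'
        exact hb'
      have hlim : Tendsto (fun k : ℕ => (sq k) ^ n * ‖z‖) atTop (𝓝 (t ^ n * ‖z‖)) := by
        have h1 : Tendsto sq atTop (𝓝 t) := by
          have h2 := tendsto_one_div_add_atTop_nhds_zero_nat (𝕜 := ℝ)
          have h3 : Tendsto (fun k : ℕ => t + 1 / ((k:ℝ) + 1)) atTop (𝓝 (t + 0)) :=
            tendsto_const_nhds.add h2
          simpa [hsq] using h3
        exact (h1.pow n).mul_const ‖z‖
      exact ge_of_tendsto hlim (Filter.Eventually.of_forall hk)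
    have hPtz : P t z = z := hPfix t z hzFt
    have hPtzx : P t z = P t x := by
      have h1 : Tendsto (fun n => P t (P (sq n) x)) atTop (𝓝 (P t z)) :=
        ((P t).continuous.tendsto _).comp hz
      have h2 : (fun n => P t (P (sq n) x)) = fun _ => P t x := by
        funext n; exact hPtP t (sq n) (le_of_lt (hsgt n)) x
      rw [h2] at h1
      exact tendsto_nhds_unique h1 tendsto_const_nhds
    have hzPtx : z = P t x := by rw [← hPtz, hPtzx]
    rw [Metric.tendsto_nhdsWithin_nhds]
    intro ε hε
    rw [Metric.tendsto_atTop] at hz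
    obtain ⟨N₁, hN₁⟩ := hz (ε / 2) (by positivity)
    rw [Metric.tendsto_atTop] at haL
    obtain ⟨N₂, hN₂⟩ := haL (ε ^ 2 / 4) (by positivity)
    set N := max N₁ N₂ with hNdef
    refine ⟨1 / ((N:ℝ) + 1), by positivity, ?_⟩
    intro u hu hdu
    rw [Set.mem_Ioi] at hu
    rw [Real.dist_eq, abs_lt] at hdu
    have hu2 : u ≤ sq N := by
      simp only [hsq]
      linarith [hdu.2]
    have h3 : ‖P (sq N) x - P u x‖ ^ 2 ≤ a N - L := by
      rw [hdiff u (sq N) hu2 x]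
      have h4 := hLlow u hu
      have : a N = ‖P (sq N) x‖ ^ 2 := rfl
      linarith
    have h5 : a N - L < ε ^ 2 / 4 := by
      have h6 := hN₂ N (le_max_right _ _)
      rw [Real.dist_eq, abs_lt] at h6
      linarith [hLle N]
    have h7 : ‖P (sq N) x - P u x‖ < ε / 2 := by
      nlinarith [norm_nonneg (P (sq N) x - P u x), hε]
    have h8 := hN₁ N (le_max_left _ _)
    rw [dist_eq_norm] at h8 ⊢
    rw [← hzPtx]
    calc ‖P u x - z‖ ≤ ‖P u x - P (sq N) x‖ + ‖P (sq N) x - z‖ :=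
          norm_sub_le_norm_sub_add_norm_sub _ _ _
    _ < ε / 2 + ε / 2 := by
        apply add_lt_add _ h8
        rw [norm_sub_rev]
        exact h7
    _ = ε := by ring
  -- limit at -∞
  · intro x
    have hzero : ∀ t : ℝ, t < 0 → P t x = 0 := by
      intro t ht
      obtain ⟨y, hy, hb⟩ := hPmem t x 1
      rw [pow_one] at hb
      have h1 : 0 ≤ t * ‖P t x‖ := le_trans (norm_nonneg y) hb
      have h2 : ‖P t x‖ = 0 := by
        rcases eq_or_lt_of_le (norm_nonneg (P t x)) with h3 | h3
        · exact h3.symm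
        · nlinarith
      exact norm_eq_zero.1 h2
    have hev : (fun _ : ℝ => (0:E)) =ᶠ[atBot] fun t => P t x := by
      filter_upwards [Filter.eventually_lt_atBot (0:ℝ)] with t ht
      exact (hzero t ht).symm
    exact Tendsto.congr' hev tendsto_const_nhds
  -- limit at +∞
  · intro x
    set b : ℕ → ℝ := fun n => ‖P (n : ℝ) x‖ ^ 2 with hbdef
    have hbmono : Monotone b := fun m n hmn => hgm _ _ (by exact_mod_cast hmn) x
    have hbbdd : BddAbove (Set.range b) := by
      refine ⟨‖x‖ ^ 2, ?_⟩
      rintro _ ⟨n, rfl⟩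
      have h1 := hcontr (n:ℝ) x
      have h2 : (0:ℝ) ≤ ‖P (n:ℝ) x‖ := norm_nonneg _
      show ‖P (n:ℝ) x‖ ^ 2 ≤ ‖x‖ ^ 2
      nlinarith
    set L : ℝ := ⨆ n, b n with hL
    have hbL : Tendsto b atTop (𝓝 L) := tendsto_atTop_ciSup hbmono hbbdd
    have hble : ∀ n, b n ≤ L := fun n => le_ciSup hbbdd n
    have hLhigh : ∀ u : ℝ, ‖P u x‖ ^ 2 ≤ L := by
      intro u
      obtain ⟨n, hn⟩ := exists_nat_ge u
      exact le_trans (hgm u (n:ℝ) hn x) (hble n)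
    have hcauchy : CauchySeq (fun n : ℕ => P (n : ℝ) x) := by
      rw [Metric.cauchySeq_iff']
      intro ε hε
      have hbc := hbL.cauchySeq
      rw [Metric.cauchySeq_iff'] at hbc
      obtain ⟨N, hN⟩ := hbc (ε ^ 2) (by positivity)
      refine ⟨N, fun n hn => ?_⟩
      have h1 := hN n hn
      rw [Real.dist_eq, abs_lt] at h1
      have h2 : ‖P (n:ℝ) x - P (N:ℝ) x‖ ^ 2 = b n - b N :=
        hdiff _ _ (by exact_mod_cast hn) x
      have h3 : ‖P (n:ℝ) x - P (N:ℝ) x‖ ^ 2 < ε ^ 2 := by rw [h2]; linarith [h1.2]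
      rw [dist_eq_norm]
      nlinarith [norm_nonneg (P (n:ℝ) x - P (N:ℝ) x), hε]
    obtain ⟨z, hz⟩ := cauchySeq_tendsto_of_complete hcauchy
    have hPsz : ∀ u : ℝ, P u z = P u x := by
      intro u
      have h1 : Tendsto (fun n : ℕ => P u (P (n : ℝ) x)) atTop (𝓝 (P u z)) :=
        ((P u).continuous.tendsto _).comp hz
      have h2 : Tendsto (fun n : ℕ => P u (P (n : ℝ) x)) atTop (𝓝 (P u x)) := by
        apply Tendsto.congr' _ tendsto_const_nhds
        obtain ⟨k, hk⟩ := exists_nat_ge u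
        filter_upwards [Filter.eventually_ge_atTop k] with n hn
        have h3 : u ≤ (n : ℝ) := le_trans hk (by exact_mod_cast hn)
        exact (hPtP u (n : ℝ) h3 x).symm
      exact tendsto_nhds_unique h1 h2
    have hworth : ∀ (lam : ℝ) (v : E), v ∈ Fset A lam → (⟪v, x - z⟫ : 𝕜) = 0 := by
      intro lam v hv
      have h1 : (⟪v, x - z⟫ : 𝕜) = ⟪P lam v, x - z⟫ := by rw [hPfix lam v hv]
      rw [h1, hPsa lam v (x - z), map_sub, hPsz lam, sub_self, inner_zero_right]
    have hwzero : x - z = 0 := by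
      by_contra hne
      have hwpos : 0 < ‖x - z‖ := norm_pos_iff.2 hne
      obtain ⟨lam, v, hv, hvn⟩ := dense_bounded_vectors A hA hpos (x - z) hwpos
      have h1 : re ⟪x - z, x - z⟫ = re ⟪x - z - v, x - z⟫ := by
        rw [inner_sub_left (𝕜 := 𝕜) (x - z) v (x - z), hworth lam v hv, sub_zero]
      have h2 : re ⟪x - z, x - z⟫ = ‖x - z‖ ^ 2 := by rw [@inner_self_eq_norm_sq 𝕜]
      have h3 : re ⟪x - z - v, x - z⟫ ≤ ‖x - z - v‖ * ‖x - z‖ := by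
        calc re ⟪x - z - v, x - z⟫ ≤ ‖(⟪x - z - v, x - z⟫ : 𝕜)‖ := RCLike.re_le_norm _
        _ ≤ ‖x - z - v‖ * ‖x - z‖ := norm_inner_le_norm _ _
      nlinarith
    have hzx : z = x := (sub_eq_zero.1 hwzero).symm
    rw [Metric.tendsto_atTop]
    intro ε hε
    rw [Metric.tendsto_atTop] at hz
    obtain ⟨N₁, hN₁⟩ := hz (ε / 2) (by positivity)
    rw [Metric.tendsto_atTop] at hbL
    obtain ⟨N₂, hN₂⟩ := hbL (ε ^ 2 / 4) (by positivity)
    set N := max N₁ N₂ with hNdef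
    refine ⟨(N : ℝ), ?_⟩
    intro u hu
    have h2 : ‖P u x - P (N:ℝ) x‖ ^ 2 = ‖P u x‖ ^ 2 - b N := hdiff _ _ hu x
    have h5 : ‖P u x - P (N:ℝ) x‖ ^ 2 < ε ^ 2 / 4 := by
      have h6 := hN₂ N (le_max_right _ _)
      rw [Real.dist_eq, abs_lt] at h6
      rw [h2]
      linarith [hLhigh u]
    have h7 : ‖P u x - P (N:ℝ) x‖ < ε / 2 := by
      nlinarith [norm_nonneg (P u x - P (N:ℝ) x), hε]
    have h8 := hN₁ N (le_max_left _ _)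
    rw [dist_eq_norm] at h8 ⊢
    calc ‖P u x - x‖ = ‖P u x - z‖ := by rw [hzx]
    _ ≤ ‖P u x - P (N:ℝ) x‖ + ‖P (N:ℝ) x - z‖ := norm_sub_le_norm_sub_add_norm_sub _ _ _
    _ < ε / 2 + ε / 2 := add_lt_add h7 h8
    _ = ε := by ring
end
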